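/- arXiv:1807.10477 — 8 statements merged into one kernel-verified Lean document; each statement's English description precedes it below -/
import Mathlib

section
/- The set of formal power series with constant coefficient 1 over a (not necessarily associative, not necessarily commutative) unital algebra A, equipped with pointwise (Cauchy) multiplication, forms a loop: there exist a left division and a right division satisfying the cancellation properties a·(a\b)=b, a\(a·b)=b, (a/b)·b=a, (a·b)/b=a. -/
/-- The Cauchy (pointwise) product of formal power series, represented by their
coefficient sequences, over a not-necessarily-associative, not-necessarily-commutative
unital algebra `A`. -/
def cmul {A : Type*} [NonAssocRing A] (a b : ℕ → A) : ℕ → A :=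
  fun n => ∑ m ∈ Finset.range (n + 1), a m * b (n - m)

/-- Left division: the unique `c` with `cmul a c = b` (when `a 0 = 1`). -/
def ldivF {A : Type*} [NonAssocRing A] (a b : ℕ → A) : ℕ → A
  | n => b n - ∑ m ∈ (Finset.Ico 1 (n + 1)).attach, a m.1 * ldivF a b (n - m.1)
  termination_by n => n
  decreasing_by
    have h := m.2
    simp only [Finset.mem_Ico] at h
    omega

/-- Right division: the unique `r` with `cmul r b = a` (when `b 0 = 1`). -/
def rdivF {A : Type*} [NonAssocRing A] (a b : ℕ → A) : ℕ → A
  | n => a n - ∑ m ∈ (Finset.range n).attach, rdivF a b m.1 * b (n - m.1)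
  termination_by n => n
  decreasing_by
    have h := m.2
    simp only [Finset.mem_range] at h
    omega

lemma cmul_split {A : Type*} [NonAssocRing A] (a c : ℕ → A) (ha : a 0 = 1) (n : ℕ) :
    cmul a c n = (∑ m ∈ Finset.Ico 1 (n + 1), a m * c (n - m)) + c n := by
  unfold cmul
  rw [Finset.range_eq_Ico, Finset.sum_eq_sum_Ico_succ_bot (by omega : 0 < n + 1)]
  simp [ha, add_comm]

lemma cmul_split' {A : Type*} [NonAssocRing A] (r b : ℕ → A) (hb : b 0 = 1) (n : ℕ) :
    cmul r b n = (∑ m ∈ Finset.range n, r m * b (n - m)) + r n := by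
  unfold cmul
  rw [Finset.sum_range_succ]
  simp [hb]

lemma cmul_ldivF {A : Type*} [NonAssocRing A] (a b : ℕ → A) (ha : a 0 = 1) :
    cmul a (ldivF a b) = b := by
  funext n
  rw [cmul_split a _ ha, ldivF]
  rw [Finset.sum_attach (Finset.Ico 1 (n + 1)) (fun m => a m * ldivF a b (n - m))]
  abel

lemma cmul_rdivF {A : Type*} [NonAssocRing A] (a b : ℕ → A) (hb : b 0 = 1) :
    cmul (rdivF a b) b = a := by
  funext n
  rw [cmul_split' _ b hb]
  conv_lhs => rw [rdivF]
  rw [Finset.sum_attach (Finset.range n) (fun m => rdivF a b m * b (n - m))]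
  abel

lemma cmul_left_cancel {A : Type*} [NonAssocRing A] (a c d : ℕ → A) (ha : a 0 = 1)
    (h : cmul a c = cmul a d) : c = d := by
  funext n
  induction n using Nat.strong_induction_on with
  | _ n ih =>
    have h1 := cmul_split a c ha n
    have h2 := cmul_split a d ha n
    rw [h] at h1
    have hs : (∑ m ∈ Finset.Ico 1 (n + 1), a m * c (n - m)) =
        ∑ m ∈ Finset.Ico 1 (n + 1), a m * d (n - m) := by
      apply Finset.sum_congr rfl
      intro m hm
      simp only [Finset.mem_Ico] at hm
      rw [ih (n - m) (by omega)]
    rw [hs] at h1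
    have := h1.symm.trans h2
    exact add_left_cancel this

lemma cmul_right_cancel {A : Type*} [NonAssocRing A] (b c d : ℕ → A) (hb : b 0 = 1)
    (h : cmul c b = cmul d b) : c = d := by
  funext n
  induction n using Nat.strong_induction_on with
  | _ n ih =>
    have h1 := cmul_split' c b hb n
    have h2 := cmul_split' d b hb n
    rw [h] at h1
    have hs : (∑ m ∈ Finset.range n, c m * b (n - m)) =
        ∑ m ∈ Finset.range n, d m * b (n - m) := by
      apply Finset.sum_congr rfl
      intro m hm
      simp only [Finset.mem_range] at hm
      rw [ih m hm]
    rw [hs] at h1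
    have := h1.symm.trans h2
    exact add_left_cancel this

/-- The set `Inv(A)` of formal power series with constant coefficient `1` over a
(not necessarily associative, not necessarily commutative) unital algebra `A`, with the
Cauchy multiplication, is a loop: there exist a left division and a right division,
preserving the constant term `1`, which satisfy the cancellation properties
`a·(a\b)=b`, `a\(a·b)=b`, `(a/b)·b=a`, `(a·b)/b=a`. -/
theorem inv_series_isLoop {A : Type*} [NonAssocRing A] :
    ∃ ldiv rdiv : (ℕ → A) → (ℕ → A) → (ℕ → A),
      ∀ a b : ℕ → A, a 0 = 1 → b 0 = 1 →
        (ldiv a b) 0 = 1 ∧ (rdiv a b) 0 = 1 ∧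
        cmul a (ldiv a b) = b ∧ ldiv a (cmul a b) = b ∧
        cmul (rdiv a b) b = a ∧ rdiv (cmul a b) b = a := by
  refine ⟨ldivF, rdivF, fun a b ha hb => ⟨?_, ?_, cmul_ldivF a b ha, ?_, cmul_rdivF a b hb, ?_⟩⟩
  · rw [ldivF]; rw [show Finset.Ico 1 (0+1) = ∅ from Finset.Ico_self 1]; simp [hb]
  · rw [rdivF]; simp [ha]
  · exact cmul_left_cancel a _ b ha (cmul_ldivF a (cmul a b) ha)
  · exact cmul_right_cancel b _ a hb (cmul_rdivF (cmul a b) b hb)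
end

section
/- In the loop Inv(A) of invertible series over any unital algebra A, the right division is given by the closed formula (a/b)_n = a_n - b_n + ∑_{ℓ=1}^{n-1} (-1)^ℓ ∑_{(n_1,...,n_{ℓ+1}) composition of n} ((((a_{n_1}-b_{n_1}) b_{n_2}) b_{n_3}) ⋯ ) b_{n_{ℓ+1}}, i.e. the series c with these coefficients satisfies (c·b)_n = a_n for all n. -/
open Finset

/-- The compositions of `n` of length `ℓ`: sequences of `ℓ` positive integers summing
to `n`. -/
def compositions (ℓ n : ℕ) : Finset (Fin ℓ → ℕ) :=
  (Finset.Nat.antidiagonalTuple ℓ n).filter fun f => ∀ i, 0 < f i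

lemma mem_compositions {ℓ n : ℕ} {f : Fin ℓ → ℕ} :
    f ∈ compositions ℓ n ↔ (∑ i, f i = n ∧ ∀ i, 0 < f i) := by
  simp [compositions, Finset.Nat.mem_antidiagonalTuple]

section Aux
variable {A : Type*} [NonAssocRing A]

/-- The inner sum in the closed formula. -/
def Gs (a b : ℕ → A) (ℓ n : ℕ) : A :=
  ∑ f ∈ compositions (ℓ + 1) n,
    (List.ofFn fun i : Fin ℓ => b (f i.succ)).foldl (· * ·) (a (f 0) - b (f 0))

variable (a b : ℕ → A)

lemma fold_snoc (k : ℕ) (g : Fin (k + 1) → ℕ) (j : ℕ) :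
    (List.ofFn fun i : Fin (k+1) => b ((Fin.snoc g j : Fin (k+2) → ℕ) i.succ)).foldl (· * ·)
      (a ((Fin.snoc g j : Fin (k+2) → ℕ) 0) - b ((Fin.snoc g j : Fin (k+2) → ℕ) 0))
    = ((List.ofFn fun i : Fin k => b (g i.succ)).foldl (· * ·) (a (g 0) - b (g 0))) * b j := by
  rw [List.ofFn_succ']
  simp only [List.concat_eq_append, List.foldl_append, List.foldl_cons, List.foldl_nil]
  have h0 : (Fin.snoc g j : Fin (k+2) → ℕ) 0 = g 0 := by
    rw [show (0 : Fin (k+2)) = Fin.castSucc 0 by simp, Fin.snoc_castSucc]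
  have hlast : (Fin.last k).succ = Fin.last (k+1) := by
    ext; simp
  have hmid : ∀ i : Fin k,
      (Fin.snoc g j : Fin (k+2) → ℕ) (Fin.castSucc i).succ = g i.succ := by
    intro i
    rw [Fin.succ_castSucc, Fin.snoc_castSucc]
  simp only [h0, hlast, Fin.snoc_last, hmid]

lemma Gs_vanish (k n : ℕ) (h : n ≤ k) : Gs a b k n = 0 := by
  rw [Gs, Finset.sum_eq_zero]
  intro f hf
  exfalso
  obtain ⟨hsum, hpos⟩ := mem_compositions.mp hf
  have h2 : (k + 1) • 1 ≤ ∑ i : Fin (k+1), f i := by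
    simpa using Finset.card_nsmul_le_sum Finset.univ f 1 (fun i _ => hpos i)
  simp only [smul_eq_mul, mul_one] at h2
  omega

lemma Gs_zero (n : ℕ) (hn : 1 ≤ n) : Gs a b 0 n = a n - b n := by
  have : compositions 1 n = {fun _ => n} := by
    ext f
    simp only [mem_compositions, Finset.mem_singleton]
    constructor
    · rintro ⟨hsum, hpos⟩
      funext i
      have : i = 0 := Subsingleton.elim _ _
      subst this
      simpa using hsum
    · rintro rfl
      refine ⟨by simp, fun i => hn⟩
  rw [Gs, this, Finset.sum_singleton]
  simp

lemma Gs_succ (k n : ℕ) :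
    Gs a b (k + 1) n = ∑ m ∈ Icc 1 (n - 1), Gs a b k m * b (n - m) := by
  simp only [Gs, Finset.sum_mul]
  rw [Finset.sum_sigma']
  refine Finset.sum_bij' (fun f _ => ⟨n - f (Fin.last (k+1)), Fin.init f⟩)
    (fun p _ => Fin.snoc p.2 (n - p.1)) ?_ ?_ ?_ ?_ ?_
  · intro f hf
    obtain ⟨hsum, hpos⟩ := mem_compositions.mp hf
    rw [Fin.sum_univ_castSucc] at hsum
    have hle : f (Fin.last (k+1)) ≤ n := by omega
    have hinitsum : ∑ i : Fin (k+1), Fin.init f i = n - f (Fin.last (k+1)) := by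
      simp only [Fin.init]; omega
    have hinitpos : ∀ i : Fin (k+1), 0 < Fin.init f i := fun i => hpos _
    have h1 : 1 ≤ n - f (Fin.last (k+1)) := by
      have := hinitpos 0
      have := Finset.single_le_sum (f := Fin.init f) (fun i _ => Nat.zero_le _)
        (Finset.mem_univ (0 : Fin (k+1)))
      omega
    simp only [Finset.mem_sigma, Finset.mem_Icc]
    exact ⟨⟨h1, by have := hpos (Fin.last (k+1)); omega⟩,
      mem_compositions.mpr ⟨hinitsum, hinitpos⟩⟩
  · rintro ⟨m, g⟩ hp
    simp only [Finset.mem_sigma, Finset.mem_Icc] at hp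
    obtain ⟨⟨hm1, hm2⟩, hg⟩ := hp
    obtain ⟨hsum, hpos⟩ := mem_compositions.mp hg
    refine mem_compositions.mpr ⟨?_, ?_⟩
    · rw [Fin.sum_univ_castSucc]
      simp only [Fin.snoc_castSucc, Fin.snoc_last]
      omega
    · intro i
      refine Fin.lastCases ?_ ?_ i
      · simp only [Fin.snoc_last]; omega
      · intro j; simp only [Fin.snoc_castSucc]; exact hpos j
  · intro f hf
    obtain ⟨hsum, hpos⟩ := mem_compositions.mp hf
    rw [Fin.sum_univ_castSucc] at hsum
    have hle : f (Fin.last (k+1)) ≤ n := by omega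
    simp only
    rw [Nat.sub_sub_self hle, Fin.snoc_init_self]
  · rintro ⟨m, g⟩ hp
    simp only [Finset.mem_sigma, Finset.mem_Icc] at hp
    obtain ⟨⟨hm1, hm2⟩, hg⟩ := hp
    have hmn : m ≤ n := by omega
    simp only [Fin.snoc_last, Fin.init_snoc]
    congr 1
    omega
  · intro f hf
    obtain ⟨hsum, hpos⟩ := mem_compositions.mp hf
    rw [Fin.sum_univ_castSucc] at hsum
    have hle : f (Fin.last (k+1)) ≤ n := by omega
    simp only [Nat.sub_sub_self hle]
    conv_lhs => rw [← Fin.snoc_init_self f]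
    exact fold_snoc a b k (Fin.init f) (f (Fin.last (k+1)))

end Aux

/-- In the loop `Inv(A)` of invertible series over any unital algebra `A`, the right
division is given by the closed formula
`(a/b)_n = a_n - b_n + ∑_{ℓ=1}^{n-1} (-1)^ℓ ∑_{(n_1,...,n_{ℓ+1}) ⊨ n}
  ((((a_{n_1}-b_{n_1}) b_{n_2}) b_{n_3}) ⋯ ) b_{n_{ℓ+1}}`
(products left-parenthesized): the series `c` with these coefficients satisfies
`(c·b)_n = a_n` for all `n`. -/
theorem inv_series_rightDivision_closedFormula {A : Type*} [NonAssocRing A]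
    (a b c : ℕ → A) (ha : a 0 = 1) (hb : b 0 = 1) (hc0 : c 0 = 1)
    (hc : ∀ n, 0 < n → c n =
      a n - b n + ∑ ℓ ∈ Finset.Icc 1 (n - 1), (-1 : ℤ) ^ ℓ •
        ∑ f ∈ compositions (ℓ + 1) n,
          (List.ofFn fun i : Fin ℓ => b (f i.succ)).foldl (· * ·) (a (f 0) - b (f 0))) :
    ∀ n, cmul c b n = a n := by
  have hc' : ∀ n, 0 < n → c n =
      a n - b n + ∑ ℓ ∈ Finset.Icc 1 (n - 1), (-1 : ℤ) ^ ℓ • Gs a b ℓ n := hc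
  intro n
  rcases Nat.eq_zero_or_pos n with rfl | hn
  · simp [cmul, hc0, hb, ha]
  -- split the Cauchy sum
  have hsplit : cmul c b n = b n + c n + ∑ m ∈ Icc 1 (n - 1), c m * b (n - m) := by
    have h1 : Finset.range (n + 1) = insert 0 (insert n (Icc 1 (n - 1))) := by
      ext x; simp [Nat.lt_succ_iff]; omega
    have h0n : (0 : ℕ) ∉ insert n (Icc 1 (n - 1)) := by simp; omega
    have hnn : n ∉ Icc 1 (n - 1) := by simp; omega
    rw [cmul, h1, Finset.sum_insert h0n, Finset.sum_insert hnn]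
    simp [hc0, hb]
    abel
  rw [hsplit]
  -- compute the middle sum
  have key : ∑ m ∈ Icc 1 (n - 1), c m * b (n - m)
      = - ∑ ℓ ∈ Finset.Icc 1 (n - 1), (-1 : ℤ) ^ ℓ • Gs a b ℓ n := by
    rcases Nat.lt_or_ge n 2 with h2 | h2
    · interval_cases n
      simp
    have step1 : ∀ m ∈ Icc 1 (n - 1), c m * b (n - m)
        = Gs a b 0 m * b (n - m)
          + ∑ ℓ ∈ Icc 1 (n - 2), (-1 : ℤ) ^ ℓ • (Gs a b ℓ m * b (n - m)) := by
      intro m hm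
      simp only [Finset.mem_Icc] at hm
      rw [hc' m (by omega), add_mul, Finset.sum_mul, Gs_zero a b m hm.1]
      congr 1
      rw [Finset.sum_subset (Finset.Icc_subset_Icc_right (by omega : m - 1 ≤ n - 2))]
      · exact Finset.sum_congr rfl fun ℓ _ => smul_mul_assoc _ _ _
      · intro ℓ hℓ hℓ'
        simp only [Finset.mem_Icc] at hℓ hℓ'
        rw [Gs_vanish a b ℓ m (by omega)]
        simp
    rw [Finset.sum_congr rfl step1, Finset.sum_add_distrib]
    rw [← Gs_succ a b 0 n]
    rw [Finset.sum_comm]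
    have step2 : ∀ ℓ ∈ Icc 1 (n - 2),
        ∑ m ∈ Icc 1 (n - 1), (-1 : ℤ) ^ ℓ • (Gs a b ℓ m * b (n - m))
          = (-1 : ℤ) ^ ℓ • Gs a b (ℓ + 1) n := by
      intro ℓ _
      rw [← Finset.smul_sum, Gs_succ a b ℓ n]
    rw [Finset.sum_congr rfl step2]
    -- reindex
    have hins : Icc 1 (n - 1) = insert 1 (Icc 2 (n - 1)) := by
      ext x; simp; omega
    rw [hins, Finset.sum_insert (by simp)]
    have hmap : Icc 2 (n - 1) = (Icc 1 (n - 2)).map (addRightEmbedding 1) := by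
      rw [Finset.map_add_right_Icc]
      congr 1 <;> omega
    rw [hmap, Finset.sum_map]
    simp only [addRightEmbedding_apply]
    rw [neg_add]
    congr 1
    · simp
    · rw [← Finset.sum_neg_distrib]
      refine Finset.sum_congr rfl fun ℓ _ => ?_
      rw [pow_succ, mul_smul]
      simp
  rw [key, hc' n hn]
  abel
end

section
/- For the sedenion algebra A (the 16-dimensional Cayley–Dickson algebra over ℝ), the loop Inv(A) is not right alternative: there exist series a,b ∈ Inv(A) with (a·b)·b ≠ a·(b·b). Concretely, with imaginary units e_i, taking a = 1 + (e_1+e_{10})λ and b = 1 + (e_5+e_{14})λ, one has (a·b)·b − a·(b·b) = 2(e_1+e_{10})λ^3 + O(λ^4) ≠ 0. -/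
/-- Cayley–Dickson doubling of the multiplication:
`(a,b)(c,d) = (ac − d* b, da + b c*)`. -/
def cdMul {B : Type} [Add B] [Sub B] (m : B → B → B) (c : B → B) :
    B × B → B × B → B × B :=
  fun x y => (m x.1 y.1 - m (c y.2) x.2, m y.2 x.1 + m x.2 (c y.1))

/-- Cayley–Dickson doubling of the conjugation: `(a,b)* = (a*, −b)`. -/
def cdConj {B : Type} [Neg B] (c : B → B) : B × B → B × B :=
  fun x => (c x.1, -x.2)

abbrev S1 : Type := ℝ × ℝ
abbrev S2 : Type := S1 × S1
abbrev S3 : Type := S2 × S2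
/-- The sedenions: the 16-dimensional Cayley–Dickson algebra over `ℝ`. -/
abbrev Sedenion : Type := S3 × S3

def m1 : S1 → S1 → S1 := cdMul (· * ·) id
def c1 : S1 → S1 := cdConj id
def m2 : S2 → S2 → S2 := cdMul m1 c1
def c2 : S2 → S2 := cdConj c1
def m3 : S3 → S3 → S3 := cdMul m2 c2
def c3 : S3 → S3 := cdConj c2
/-- Sedenion multiplication. -/
def sMul : Sedenion → Sedenion → Sedenion := cdMul m3 c3

/-- The unit `1` of the sedenions. -/
def sOne : Sedenion := ((((1, 0), 0), 0), 0)

/-- The imaginary units `e_1`, `e_5`, `e_10`, `e_14` (binary indexing through the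
four Cayley–Dickson doublings). -/
def e1 : Sedenion := ((((0, 1), 0), 0), 0)
def e5 : Sedenion := ((0, ((0, 1), 0)), 0)
def e10 : Sedenion := (0, ((0, (1, 0)), 0))
def e14 : Sedenion := (0, (0, (0, (1, 0))))

/-- The Cauchy product of formal series with sedenion coefficients. -/
def cmulS (a b : ℕ → Sedenion) : ℕ → Sedenion :=
  fun n => ∑ m ∈ Finset.range (n + 1), sMul (a m) (b (n - m))

lemma sMul_one (x : Sedenion) : sMul sOne x = x := by
  obtain ⟨⟨⟨⟨a0,a1⟩,a2,a3⟩,⟨a4,a5⟩,a6,a7⟩,⟨⟨a8,a9⟩,a10,a11⟩,⟨a12,a13⟩,a14,a15⟩ := x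
  simp [sMul, m3, m2, m1, c3, c2, c1, cdMul, cdConj, sOne, Prod.ext_iff]

lemma sMul_one' (x : Sedenion) : sMul x sOne = x := by
  obtain ⟨⟨⟨⟨a0,a1⟩,a2,a3⟩,⟨a4,a5⟩,a6,a7⟩,⟨⟨a8,a9⟩,a10,a11⟩,⟨a12,a13⟩,a14,a15⟩ := x
  simp [sMul, m3, m2, m1, c3, c2, c1, cdMul, cdConj, sOne, Prod.ext_iff]

lemma sMul_zero (x : Sedenion) : sMul x 0 = 0 := by
  obtain ⟨⟨⟨⟨a0,a1⟩,a2,a3⟩,⟨a4,a5⟩,a6,a7⟩,⟨⟨a8,a9⟩,a10,a11⟩,⟨a12,a13⟩,a14,a15⟩ := x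
  simp [sMul, m3, m2, m1, c3, c2, c1, cdMul, cdConj, Prod.ext_iff]

lemma sMul_zero' (x : Sedenion) : sMul 0 x = 0 := by
  obtain ⟨⟨⟨⟨a0,a1⟩,a2,a3⟩,⟨a4,a5⟩,a6,a7⟩,⟨⟨a8,a9⟩,a10,a11⟩,⟨a12,a13⟩,a14,a15⟩ := x
  simp [sMul, m3, m2, m1, c3, c2, c1, cdMul, cdConj, Prod.ext_iff]

lemma uv_zero : sMul (e1 + e10) (e5 + e14) = 0 := by
  simp [sMul, m3, m2, m1, c3, c2, c1, cdMul, cdConj, e1, e5, e10, e14, Prod.ext_iff]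

lemma vv_val : sMul (e5 + e14) (e5 + e14) = -(2 • sOne) := by
  simp [sMul, m3, m2, m1, c3, c2, c1, cdMul, cdConj, sOne, e5, e14, Prod.ext_iff]
  norm_num

lemma u_vv : sMul (e1 + e10) (-(2 • sOne)) = -(2 • (e1 + e10)) := by
  simp [sMul, m3, m2, m1, c3, c2, c1, cdMul, cdConj, sOne, e1, e10, Prod.ext_iff]

set_option maxHeartbeats 2000000 in
/-- The loop `Inv(A)` for `A` the sedenion algebra is not right alternative:
for `a = 1 + (e_1+e_{10})λ` and `b = 1 + (e_5+e_{14})λ` one has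
`(a·b)·b − a·(b·b) = 2(e_1+e_{10})λ³ + O(λ⁴) ≠ 0`. -/
theorem inv_sedenions_not_rightAlternative :
    let a : ℕ → Sedenion := fun n => if n = 0 then sOne else if n = 1 then e1 + e10 else 0
    let b : ℕ → Sedenion := fun n => if n = 0 then sOne else if n = 1 then e5 + e14 else 0
    cmulS (cmulS a b) b ≠ cmulS a (cmulS b b) ∧
    (cmulS (cmulS a b) b) 3 - (cmulS a (cmulS b b)) 3 = 2 • (e1 + e10) ∧
    e1 + e10 ≠ 0 := by
  intro a b
  have key : (cmulS (cmulS a b) b) 3 - (cmulS a (cmulS b b)) 3 = 2 • (e1 + e10) := by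
    have hab : ∀ n, (cmulS a b) n = if n = 0 then sOne else if n = 1 then (e1+e10)+(e5+e14)
        else 0 := by
      intro n
      match n with
      | 0 => simp [cmulS, a, b, Finset.sum_range_succ, sMul_one, sMul_one']
      | 1 =>
        simp [cmulS, a, b, Finset.sum_range_succ, sMul_one, sMul_one']
        abel
      | 2 => simp [cmulS, a, b, Finset.sum_range_succ, sMul_one, sMul_one', sMul_zero,
              sMul_zero', uv_zero]
      | (k+3) =>
        simp only [cmulS]
        rw [if_neg (by omega), if_neg (by omega)]
        apply Finset.sum_eq_zero
        intro m hm
        simp only [Finset.mem_range] at hm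
        match m with
        | 0 =>
          have hb : b (k+3-0) = 0 := by
            simp only [b]
            rw [if_neg (by omega), if_neg (by omega)]
          rw [hb, sMul_zero]
        | 1 =>
          have hb : b (k+3-1) = 0 := by
            simp only [b]
            rw [if_neg (by omega), if_neg (by omega)]
          rw [hb, sMul_zero]
        | (j+2) =>
          have ha : a (j+2) = 0 := by
            simp only [a]
            rw [if_neg (by omega), if_neg (by omega)]
          rw [ha, sMul_zero']
    have hbb : ∀ n, (cmulS b b) n = if n = 0 then sOne else if n = 1 then (e5+e14)+(e5+e14)
        else if n = 2 then -(2 • sOne) else 0 := by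
      intro n
      match n with
      | 0 => simp [cmulS, b, Finset.sum_range_succ, sMul_one, sMul_one']
      | 1 => simp [cmulS, b, Finset.sum_range_succ, sMul_one, sMul_one']
      | 2 => simp [cmulS, b, Finset.sum_range_succ, sMul_one, sMul_one', sMul_zero,
              sMul_zero', vv_val]
      | (k+3) =>
        simp only [cmulS]
        rw [if_neg (by omega), if_neg (by omega), if_neg (by omega)]
        apply Finset.sum_eq_zero
        intro m hm
        simp only [Finset.mem_range] at hm
        match m with
        | 0 =>
          have hb : b (k+3-0) = 0 := by
            simp only [b]
            rw [if_neg (by omega), if_neg (by omega)]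
          rw [hb, sMul_zero]
        | 1 =>
          have hb : b (k+3-1) = 0 := by
            simp only [b]
            rw [if_neg (by omega), if_neg (by omega)]
          rw [hb, sMul_zero]
        | (j+2) =>
          have hb : b (j+2) = 0 := by
            simp only [b]
            rw [if_neg (by omega), if_neg (by omega)]
          rw [hb, sMul_zero']
    show (∑ m ∈ Finset.range 4, sMul ((cmulS a b) m) (b (3 - m))) -
         (∑ m ∈ Finset.range 4, sMul (a m) ((cmulS b b) (3 - m))) = 2 • (e1 + e10)
    rw [Finset.sum_range_succ, Finset.sum_range_succ, Finset.sum_range_succ,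
        Finset.sum_range_succ, Finset.sum_range_zero,
        Finset.sum_range_succ, Finset.sum_range_succ, Finset.sum_range_succ,
        Finset.sum_range_succ, Finset.sum_range_zero,
        hab 0, hab 1, hab 2, hab 3]
    show (0:Sedenion) + sMul sOne (b 3) + sMul ((e1+e10)+(e5+e14)) (b 2)
        + sMul 0 (b 1) + sMul 0 (b 0)
      - (0 + sMul (a 0) ((cmulS b b) 3) + sMul (a 1) ((cmulS b b) 2)
        + sMul (a 2) ((cmulS b b) 1) + sMul (a 3) ((cmulS b b) 0)) = 2 • (e1 + e10)
    rw [hbb 3, hbb 2, hbb 1, hbb 0]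
    show (0:Sedenion) + sMul sOne (b 3) + sMul ((e1+e10)+(e5+e14)) (b 2)
        + sMul 0 (b 1) + sMul 0 (b 0)
      - (0 + sMul (a 0) 0 + sMul (a 1) (-(2 • sOne))
        + sMul (a 2) ((e5+e14)+(e5+e14)) + sMul (a 3) sOne) = 2 • (e1 + e10)
    show (0:Sedenion) + sMul sOne 0 + sMul ((e1+e10)+(e5+e14)) 0
        + sMul 0 (e5+e14) + sMul 0 sOne
      - (0 + sMul sOne 0 + sMul (e1+e10) (-(2 • sOne))
        + sMul 0 ((e5+e14)+(e5+e14)) + sMul 0 sOne) = 2 • (e1 + e10)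
    simp only [sMul_zero, sMul_zero', u_vv]
    abel
  have hne : e1 + e10 ≠ 0 := by
    simp [e1, e10, Prod.ext_iff]
  refine ⟨?_, key, hne⟩
  intro h
  rw [h, sub_self] at key
  apply hne
  have h2 : (2:ℕ) • (e1 + e10) = 0 := key.symm
  rw [two_nsmul] at h2
  have h3 : e1 + e10 = -(e1 + e10) := by
    rw [eq_neg_iff_add_eq_zero]; exact h2
  have h4 := congrArg (fun z : Sedenion => z + (e1+e10)) h3
  simp [e1, e10, Prod.ext_iff] at h4
end

section
/- In Diff(A), the left division defined recursively by (a\b)_0 = 1 and (a\b)_n = b_n − ∑_{m=1}^{n} ∑_{k_0+⋯+k_m=n-m} a_m (a\b)_{k_0}⋯(a\b)_{k_m} satisfies the cancellation identity (a\(a∘b))_n = b_n for all n ≥ 0. -/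
/-- Composition of formal diffeomorphisms tangent to the identity, on coefficient
sequences (`a n` is the coefficient of `λ^{n+1}`). -/
def comp {A : Type*} [Ring A] (a b : ℕ → A) : ℕ → A := fun n =>
  ∑ m ∈ Finset.range (n + 1), ∑ k ∈ Finset.Nat.antidiagonalTuple (m + 1) (n - m),
    a m * (List.ofFn fun i : Fin (m + 1) => b (k i)).prod

/-- In `Diff(A)`, the left division defined recursively by `(a\d)_0 = 1` and
`(a\d)_n = d_n − ∑_{m=1}^{n} ∑_{k_0+⋯+k_m=n-m} a_m (a\d)_{k_0}⋯(a\d)_{k_m}` satisfies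
the cancellation identity `(a\(a∘b))_n = b_n` for all `n ≥ 0`: here `c = a\(a∘b)`. -/
theorem diff_leftDivision_cancellation {A : Type*} [Ring A]
    (a b c : ℕ → A) (ha : a 0 = 1) (hb : b 0 = 1) (hc0 : c 0 = 1)
    (hc : ∀ n, 0 < n → c n = (comp a b) n -
      ∑ m ∈ Finset.Icc 1 n,
        a m * ∑ k ∈ Finset.Nat.antidiagonalTuple (m + 1) (n - m),
          (List.ofFn fun i : Fin (m + 1) => c (k i)).prod) :
    ∀ n, c n = b n := by
  intro n
  induction n using Nat.strong_induction_on with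
  | _ n ih =>
    rcases Nat.eq_zero_or_pos n with rfl | hn
    · rw [hc0, hb]
    · rw [hc n hn]
      have hsplit : Finset.range (n + 1) = insert 0 (Finset.Icc 1 n) := by
        ext x; simp [Finset.mem_range, Finset.mem_Icc]; omega
      have h0 : (0 : ℕ) ∉ Finset.Icc 1 n := by simp
      rw [comp, hsplit, Finset.sum_insert h0]
      have hzero : ∑ k ∈ Finset.Nat.antidiagonalTuple (0 + 1) (n - 0),
          a 0 * (List.ofFn fun i : Fin (0 + 1) => b (k i)).prod = b n := by
        simp [Finset.Nat.antidiagonalTuple_one, ha]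
      rw [hzero]
      have heq : ∀ m ∈ Finset.Icc 1 n,
          (∑ k ∈ Finset.Nat.antidiagonalTuple (m + 1) (n - m),
            a m * (List.ofFn fun i : Fin (m + 1) => b (k i)).prod) =
          a m * ∑ k ∈ Finset.Nat.antidiagonalTuple (m + 1) (n - m),
            (List.ofFn fun i : Fin (m + 1) => c (k i)).prod := by
        intro m hm
        rw [Finset.mul_sum]
        refine Finset.sum_congr rfl fun k hk => ?_
        have hbc : ∀ i : Fin (m + 1), c (k i) = b (k i) := by
          intro i
          refine ih (k i) ?_
          have hsum := (Finset.Nat.mem_antidiagonalTuple).mp hk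
          have hki : k i ≤ n - m := hsum ▸ Finset.single_le_sum (f := k)
            (fun _ _ => Nat.zero_le _) (Finset.mem_univ i)
          have hm1 : 1 ≤ m := (Finset.mem_Icc.mp hm).1
          omega
        simp only [hbc]
      rw [Finset.sum_congr rfl heq]
      exact add_sub_cancel_right _ _
end

section
/- If A is a commutative associative unital algebra, then Diff(A) with composition is an (associative) group, i.e. (a∘b)∘c = a∘(b∘c) for all a,b,c ∈ Diff(A). -/
section Aux

variable {A : Type*} [CommRing A]

lemma comp_apply (a b : ℕ → A) (n : ℕ) :
    comp a b n = ∑ m ∈ Finset.range (n + 1), a m *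
      ∑ k ∈ Finset.Nat.antidiagonalTuple (m + 1) (n - m), ∏ i, b (k i) := by
  unfold comp
  simp_rw [List.prod_ofFn, Finset.mul_sum]

lemma sum_adT_succ {M : Type*} [AddCommMonoid M] (j n : ℕ) (f : (Fin (j + 1) → ℕ) → M) :
    ∑ k ∈ Finset.Nat.antidiagonalTuple (j + 1) n, f k
      = ∑ p ∈ Finset.HasAntidiagonal.antidiagonal n, ∑ k ∈ Finset.Nat.antidiagonalTuple j p.2,
          f (Fin.cons p.1 k) := by
  rw [Finset.sum_sigma']
  refine Finset.sum_nbij' (fun k => ⟨(k 0, ∑ i : Fin j, k i.succ), Fin.tail k⟩)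
    (fun x => Fin.cons x.1.1 x.2) ?_ ?_ ?_ ?_ ?_
  · intro k hk
    rw [Finset.Nat.mem_antidiagonalTuple] at hk
    rw [Finset.mem_sigma, Finset.HasAntidiagonal.mem_antidiagonal, Finset.Nat.mem_antidiagonalTuple]
    constructor
    · rw [← hk, Fin.sum_univ_succ]
    · rfl
  · intro x hx
    rw [Finset.mem_sigma, Finset.HasAntidiagonal.mem_antidiagonal, Finset.Nat.mem_antidiagonalTuple] at hx
    rw [Finset.Nat.mem_antidiagonalTuple, Fin.sum_univ_succ]
    simp only [Fin.cons_zero, Fin.cons_succ]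
    rw [hx.2, hx.1]
  · intro k _
    simp [Fin.cons_self_tail]
  · intro x hx
    rw [Finset.mem_sigma, Finset.HasAntidiagonal.mem_antidiagonal, Finset.Nat.mem_antidiagonalTuple] at hx
    simp only [Fin.cons_zero, Fin.cons_succ, Fin.tail_cons]
    rw [hx.2]
  · intro k _
    dsimp only
    rw [Fin.cons_self_tail]

lemma coeff_pow_eq (q : Polynomial A) (j n : ℕ) :
    (q ^ j).coeff n = ∑ k ∈ Finset.Nat.antidiagonalTuple j n, ∏ i, q.coeff (k i) := by
  induction j generalizing n with
  | zero =>
    cases n with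
    | zero => simp [Finset.Nat.antidiagonalTuple_zero_zero]
    | succ n => simp [Finset.Nat.antidiagonalTuple_zero_succ, Polynomial.coeff_one]
  | succ j ih =>
    rw [pow_succ', Polynomial.coeff_mul, sum_adT_succ]
    refine Finset.sum_congr rfl fun p _ => ?_
    rw [ih, Finset.mul_sum]
    refine Finset.sum_congr rfl fun k _ => ?_
    rw [Fin.prod_univ_succ, Fin.cons_zero]
    simp [Fin.cons_succ]

lemma coeff_pow_eq_zero (q : Polynomial A) (hq : q.coeff 0 = 0) {j n : ℕ} (h : n < j) :
    (q ^ j).coeff n = 0 := by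
  rw [coeff_pow_eq]
  refine Finset.sum_eq_zero fun k hk => ?_
  rw [Finset.Nat.mem_antidiagonalTuple] at hk
  have hz : ∃ i, k i = 0 := by
    by_contra hcon
    push_neg at hcon
    have hle : j ≤ ∑ i, k i := by
      calc j = ∑ _i : Fin j, 1 := by simp
        _ ≤ ∑ i, k i := Finset.sum_le_sum fun i _ => Nat.one_le_iff_ne_zero.2 (hcon i)
    omega
  obtain ⟨i, hi⟩ := hz
  exact Finset.prod_eq_zero (Finset.mem_univ i) (by rw [hi, hq])

lemma coeff_pow_shift (q : Polynomial A) (hq : q.coeff 0 = 0) {j n : ℕ} (h : j ≤ n) :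
    (q ^ j).coeff n
      = ∑ k ∈ Finset.Nat.antidiagonalTuple j (n - j), ∏ i, q.coeff (k i + 1) := by
  classical
  rw [coeff_pow_eq]
  rw [← Finset.sum_filter_of_ne (p := fun k : Fin j → ℕ => ∀ i, k i ≠ 0)
    (fun k _ hne i => fun hk0 => hne (Finset.prod_eq_zero (Finset.mem_univ i) (by rw [hk0, hq])))]
  have hi : ∀ k ∈ (Finset.Nat.antidiagonalTuple j n).filter (fun k => ∀ i, k i ≠ 0),
      (fun i => k i - 1) ∈ Finset.Nat.antidiagonalTuple j (n - j) := by
    intro k hk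
    rw [Finset.mem_filter, Finset.Nat.mem_antidiagonalTuple] at hk
    rw [Finset.Nat.mem_antidiagonalTuple]
    have h2 : ∑ i, (k i - 1) + ∑ _i : Fin j, 1 = ∑ i, k i := by
      rw [← Finset.sum_add_distrib]
      exact Finset.sum_congr rfl fun i _ => Nat.succ_pred_eq_of_pos
        (Nat.pos_of_ne_zero (hk.2 i))
    simp only [Finset.sum_const, Finset.card_univ, Fintype.card_fin, smul_eq_mul,
      mul_one] at h2
    omega
  have hj' : ∀ k ∈ Finset.Nat.antidiagonalTuple j (n - j),
      (fun i => k i + 1) ∈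
        (Finset.Nat.antidiagonalTuple j n).filter (fun k => ∀ i, k i ≠ 0) := by
    intro k hk
    rw [Finset.Nat.mem_antidiagonalTuple] at hk
    rw [Finset.mem_filter, Finset.Nat.mem_antidiagonalTuple]
    refine ⟨?_, fun i => by simp⟩
    rw [Finset.sum_add_distrib]
    simp only [Finset.sum_const, Finset.card_univ, Fintype.card_fin, smul_eq_mul, mul_one]
    omega
  refine Finset.sum_nbij' (fun k i => k i - 1) (fun k i => k i + 1) hi hj' ?_ ?_ ?_
  · intro k hk
    rw [Finset.mem_filter] at hk
    funext i
    have := hk.2 i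
    simp only []
    omega
  · intro k _
    funext i
    simp only []
    omega
  · intro k hk
    rw [Finset.mem_filter] at hk
    refine Finset.prod_congr rfl fun i _ => ?_
    have := hk.2 i
    congr 1
    simp only []
    omega

lemma coeff_comp_eq (p q : Polynomial A) (hq : q.coeff 0 = 0) (n : ℕ) :
    (p.comp q).coeff (n + 1) = ∑ m ∈ Finset.range (n + 1), p.coeff (m + 1) *
      ∑ k ∈ Finset.Nat.antidiagonalTuple (m + 1) (n - m), ∏ i, q.coeff (k i + 1) := by
  calc (p.comp q).coeff (n + 1)
      = ∑ e ∈ p.support, p.coeff e * (q ^ e).coeff (n + 1) := by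
        rw [Polynomial.comp_eq_sum_left, Polynomial.sum_def, Polynomial.finset_sum_coeff]
        simp_rw [Polynomial.coeff_C_mul]
    _ = ∑ e ∈ p.support ∪ (Finset.range (n + 1)).image (· + 1),
          p.coeff e * (q ^ e).coeff (n + 1) :=
        Finset.sum_subset Finset.subset_union_left (fun e _ he => by
          rw [Polynomial.notMem_support_iff.mp he, zero_mul])
    _ = ∑ e ∈ (Finset.range (n + 1)).image (· + 1), p.coeff e * (q ^ e).coeff (n + 1) := by
        refine (Finset.sum_subset Finset.subset_union_right fun e het he => ?_).symm
        have he' : e = 0 ∨ n + 1 < e := by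
          simp only [Finset.mem_image, Finset.mem_range] at he
          push_neg at he
          by_contra hcon
          push_neg at hcon
          exact he (e - 1) (by omega) (by omega)
        rcases he' with rfl | h
        · simp [Polynomial.coeff_one]
        · rw [coeff_pow_eq_zero q hq h, mul_zero]
    _ = ∑ m ∈ Finset.range (n + 1), p.coeff (m + 1) * (q ^ (m + 1)).coeff (n + 1) := by
        rw [Finset.sum_image (fun x _ y _ h => by simpa using h)]
    _ = _ := by
        refine Finset.sum_congr rfl fun m hm => ?_
        rw [coeff_pow_shift q hq (by
          rw [Finset.mem_range] at hm; omega : m + 1 ≤ n + 1)]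
        rw [Nat.succ_sub_succ]

/-- Truncation polynomial `∑_{k=0}^N a_k X^{k+1}`. -/
noncomputable def Qp (a : ℕ → A) (N : ℕ) : Polynomial A :=
  ∑ k ∈ Finset.range (N + 1), Polynomial.C (a k) * Polynomial.X ^ (k + 1)

lemma Qp_coeff_zero (a : ℕ → A) (N : ℕ) : (Qp a N).coeff 0 = 0 := by
  rw [Qp, Polynomial.finset_sum_coeff]
  refine Finset.sum_eq_zero fun k _ => ?_
  rw [Polynomial.coeff_C_mul, Polynomial.coeff_X_pow, if_neg (by omega), mul_zero]

lemma Qp_coeff_succ (a : ℕ → A) (N m : ℕ) (h : m ≤ N) : (Qp a N).coeff (m + 1) = a m := by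
  rw [Qp, Polynomial.finset_sum_coeff]
  rw [Finset.sum_eq_single m
    (fun k _ hk => by
      rw [Polynomial.coeff_C_mul, Polynomial.coeff_X_pow, if_neg (by omega), mul_zero])
    (fun hm => absurd (Finset.mem_range.mpr (by omega)) hm)]
  rw [Polynomial.coeff_C_mul, Polynomial.coeff_X_pow, if_pos rfl, mul_one]

lemma Qp_eval_zero (a : ℕ → A) (N : ℕ) : (Qp a N).eval 0 = 0 := by
  rw [← Polynomial.coeff_zero_eq_eval_zero]; exact Qp_coeff_zero a N

lemma comp_eq_coeff (a b : ℕ → A) {n N : ℕ} (h : n ≤ N) :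
    comp a b n = ((Qp a N).comp (Qp b N)).coeff (n + 1) := by
  rw [coeff_comp_eq _ _ (Qp_coeff_zero b N), comp_apply]
  refine Finset.sum_congr rfl fun m hm => ?_
  rw [Finset.mem_range] at hm
  rw [Qp_coeff_succ a N m (by omega)]
  congr 1
  refine Finset.sum_congr rfl fun k hk => ?_
  rw [Finset.Nat.mem_antidiagonalTuple] at hk
  refine Finset.prod_congr rfl fun i _ => ?_
  have hki : k i ≤ n - m :=
    hk ▸ Finset.single_le_sum (f := k) (fun _ _ => Nat.zero_le _) (Finset.mem_univ i)
  rw [Qp_coeff_succ b N (k i) (by omega)]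

end Aux

/-- If `A` is a commutative associative unital algebra, then `Diff(A)` with composition
is an (associative) group: `(a∘b)∘c = a∘(b∘c)` for all `a,b,c ∈ Diff(A)`. -/
theorem diff_assoc_of_commutative {A : Type*} [CommRing A]
    (a b c : ℕ → A) (ha : a 0 = 1) (hb : b 0 = 1) (hc : c 0 = 1) :
    comp (comp a b) c = comp a (comp b c) := by
  funext n
  have h1 : comp (comp a b) c n = (((Qp a n).comp (Qp b n)).comp (Qp c n)).coeff (n + 1) := by
    rw [coeff_comp_eq _ _ (Qp_coeff_zero c n), comp_apply]
    refine Finset.sum_congr rfl fun m hm => ?_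
    rw [Finset.mem_range] at hm
    rw [comp_eq_coeff a b (show m ≤ n by omega)]
    congr 1
    refine Finset.sum_congr rfl fun k hk => ?_
    rw [Finset.Nat.mem_antidiagonalTuple] at hk
    refine Finset.prod_congr rfl fun i _ => ?_
    have hki : k i ≤ n - m :=
      hk ▸ Finset.single_le_sum (f := k) (fun _ _ => Nat.zero_le _) (Finset.mem_univ i)
    rw [Qp_coeff_succ c n (k i) (by omega)]
  have hq0 : ((Qp b n).comp (Qp c n)).coeff 0 = 0 := by
    rw [Polynomial.coeff_zero_eq_eval_zero, Polynomial.eval_comp, Qp_eval_zero, Qp_eval_zero]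
  have h2 : comp a (comp b c) n = ((Qp a n).comp ((Qp b n).comp (Qp c n))).coeff (n + 1) := by
    rw [coeff_comp_eq _ _ hq0, comp_apply]
    refine Finset.sum_congr rfl fun m hm => ?_
    rw [Finset.mem_range] at hm
    rw [Qp_coeff_succ a n m (by omega)]
    congr 1
    refine Finset.sum_congr rfl fun k hk => ?_
    rw [Finset.Nat.mem_antidiagonalTuple] at hk
    refine Finset.prod_congr rfl fun i _ => ?_
    have hki : k i ≤ n - m :=
      hk ▸ Finset.single_le_sum (f := k) (fun _ _ => Nat.zero_le _) (Finset.mem_univ i)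
    rw [comp_eq_coeff b c (show k i ≤ n by omega)]
  rw [h1, h2, Polynomial.comp_assoc]
end

section
/- The Lagrange coefficients satisfy the alternating-sign recursion d_ℓ(n_1,...,n_ℓ) = ∑_{i=0}^{ℓ-1} (−1)^{ℓ−1−i} C(n_1+⋯+n_{i+1}+1, ℓ−i) · d_i(n_1,...,n_i) for all ℓ ≥ 1 and positive integers n_1,...,n_ℓ. -/
/-- The set `M_ℓ` of ballot sequences: `(m_1,...,m_ℓ) ∈ ℕ^ℓ` with `∑ m_i = ℓ` and
`m_1+⋯+m_j ≥ j` for `j < ℓ`. -/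
def lagM (ℓ : ℕ) : Finset (Fin ℓ → ℕ) :=
  (Finset.Nat.antidiagonalTuple ℓ ℓ).filter fun m =>
    ∀ j, j < ℓ → j ≤ ∑ i ∈ Finset.univ.filter (fun i : Fin ℓ => (i : ℕ) < j), m i

/-- The Lagrange coefficient `d_ℓ(n_1,...,n_ℓ)`, taking the arguments from the
(0-indexed) sequence `nn`, so `n_i = nn (i-1)`; `d_0 = 1`. -/
def lagd (ℓ : ℕ) (nn : ℕ → ℕ) : ℕ :=
  ∑ m ∈ lagM ℓ, ∏ i : Fin ℓ, (nn (i : ℕ) + 1).choose (m i)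

open Finset

private lemma pascal_second (t : ℕ → ℤ) (n r : ℕ) :
    ∑ j ∈ range (r+1), t j * ((n+1).choose (r-j) : ℤ)
      = ∑ j ∈ range (r+1), t j * (n.choose (r-j) : ℤ)
        + ∑ j ∈ range r, t j * (n.choose (r-1-j) : ℤ) := by
  rw [sum_range_succ, sum_range_succ (f := fun j => t j * (n.choose (r-j) : ℤ))]
  rw [Nat.sub_self]
  have h : ∑ j ∈ range r, t j * ((n+1).choose (r-j) : ℤ)
      = ∑ j ∈ range r, (t j * (n.choose (r-j) : ℤ) + t j * (n.choose (r-1-j) : ℤ)) := by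
    refine sum_congr rfl fun j hj => ?_
    have hj' : j < r := mem_range.mp hj
    have h1 : r - j = (r-1-j) + 1 := by omega
    rw [h1, Nat.choose_succ_succ]
    push_cast; ring
  rw [h, sum_add_distrib]
  simp only [Nat.choose_zero_right, Nat.cast_one]
  ring

private lemma pascal_first (u : ℕ → ℤ) (m r : ℕ) :
    ∑ j ∈ range (r+1), (-1:ℤ)^j * ((m+1+j).choose j : ℤ) * u j
      = ∑ j ∈ range (r+1), (-1:ℤ)^j * ((m+j).choose j : ℤ) * u j
        - ∑ j ∈ range r, (-1:ℤ)^j * ((m+1+j).choose j : ℤ) * u (j+1) := by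
  rw [sum_range_succ', sum_range_succ' (f := fun j => (-1:ℤ)^j * ((m+j).choose j : ℤ) * u j)]
  simp only [pow_zero, Nat.choose_zero_right, Nat.cast_one, one_mul, mul_one]
  have h : ∀ j : ℕ, (-1:ℤ)^(j+1) * ((m+1+(j+1)).choose (j+1) : ℤ) * u (j+1)
      = (-1:ℤ)^(j+1) * ((m+(j+1)).choose (j+1) : ℤ) * u (j+1)
        - (-1:ℤ)^j * ((m+1+j).choose j : ℤ) * u (j+1) := by
    intro j
    have : m+1+(j+1) = (m+1+j)+1 := by ring
    rw [this, Nat.choose_succ_succ (m+1+j) j]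
    have : m+(j+1) = m+1+j := by ring
    rw [this]
    push_cast; ring
  calc ∑ j ∈ range r, (-1:ℤ)^(j+1) * ((m+1+(j+1)).choose (j+1) : ℤ) * u (j+1) + u 0
      = ∑ j ∈ range r, ((-1:ℤ)^(j+1) * ((m+(j+1)).choose (j+1) : ℤ) * u (j+1)
          - (-1:ℤ)^j * ((m+1+j).choose j : ℤ) * u (j+1)) + u 0 := by
        rw [sum_congr rfl fun j _ => h j]
    _ = _ := by rw [sum_sub_distrib]; ring

private lemma flem (n c r : ℕ) :
    ∑ j ∈ range (r+1), (-1:ℤ)^j * ((n+c+j).choose j : ℤ) * (n.choose (r-j) : ℤ)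
      = (-1:ℤ)^r * ((c+r).choose r : ℤ) := by
  induction n with
  | zero =>
    rw [sum_eq_single r]
    · simp [Nat.sub_self, Nat.add_comm c r]
    · intro b hb hbr
      have hb' : b < r := lt_of_le_of_ne (Nat.lt_succ_iff.mp (mem_range.mp hb)) hbr
      have : (0 : ℕ).choose (r - b) = 0 := Nat.choose_eq_zero_of_lt (by omega)
      simp [this]
    · intro h; exact absurd (self_mem_range_succ r) h
  | succ n ih =>
    have step1 := pascal_second (fun j => (-1:ℤ)^j * ((n+1+c+j).choose j : ℤ)) n r
    have e1 : ∀ j : ℕ, n+1+c+j = (n+c)+1+j := fun j => by ring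
    have step2 := pascal_first (fun j => (n.choose (r-j) : ℤ)) (n+c) r
    have e2 : ∀ j : ℕ, r - (j+1) = r-1-j := fun j => by omega
    calc ∑ j ∈ range (r+1), (-1:ℤ)^j * ((n+1+c+j).choose j : ℤ) * (n+1).choose (r-j)
        = ∑ j ∈ range (r+1), (-1:ℤ)^j * ((n+c+1+j).choose j : ℤ) * (n.choose (r-j) : ℤ)
          + ∑ j ∈ range r, (-1:ℤ)^j * ((n+c+1+j).choose j : ℤ) * (n.choose (r-1-j) : ℤ) := by
          rw [step1]
          congr 1 <;> exact sum_congr rfl fun j _ => by rw [show n+1+c+j = n+c+1+j by ring]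
      _ = ∑ j ∈ range (r+1), (-1:ℤ)^j * (((n+c)+j).choose j : ℤ) * (n.choose (r-j) : ℤ) := by
          rw [show ∀ s : Finset ℕ, ∑ j ∈ s, (-1:ℤ)^j * ((n+c+1+j).choose j : ℤ) * (n.choose (r-j) : ℤ)
              = ∑ j ∈ s, (-1:ℤ)^j * (((n+c)+1+j).choose j : ℤ) * (n.choose (r-j) : ℤ) from
            fun s => sum_congr rfl fun j _ => by norm_num]
          rw [step2]
          have : ∑ j ∈ range r, (-1:ℤ)^j * (((n+c)+1+j).choose j : ℤ) * (n.choose (r-(j+1)) : ℤ)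
              = ∑ j ∈ range r, (-1:ℤ)^j * ((n+c+1+j).choose j : ℤ) * (n.choose (r-1-j) : ℤ) := by
            exact sum_congr rfl fun j _ => by rw [e2 j]
          rw [this]; ring
      _ = (-1:ℤ)^r * ((c+r).choose r : ℤ) := ih

private lemma B1lem (n r : ℕ) (hr : 1 ≤ r) :
    ∑ j ∈ range (r+1), (-1:ℤ)^j * ((n+j).choose j : ℤ) * ((n+1).choose (r-j) : ℤ) = 0 := by
  rw [pascal_second (fun j => (-1:ℤ)^j * ((n+j).choose j : ℤ)) n r]
  obtain ⟨r', rfl⟩ : ∃ r', r = r' + 1 := ⟨r - 1, by omega⟩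
  have h1 : ∑ j ∈ range (r'+1+1), (-1:ℤ)^j * ((n+j).choose j : ℤ) * (n.choose (r'+1-j) : ℤ)
      = (-1:ℤ)^(r'+1) * ((0+(r'+1)).choose (r'+1) : ℤ) := by
    have := flem n 0 (r'+1); simpa [Nat.add_zero] using this
  have h2 : ∑ j ∈ range (r'+1), (-1:ℤ)^j * ((n+j).choose j : ℤ) * (n.choose (r'+1-1-j) : ℤ)
      = (-1:ℤ)^r' * ((0+r').choose r' : ℤ) := by
    simp only [Nat.add_sub_cancel]
    simpa using flem n 0 r'
  rw [h1, h2]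
  simp [Nat.choose_self, pow_succ]

def gset (k s : ℕ) : Finset (Fin k → ℕ) :=
  (Finset.Nat.antidiagonalTuple k s).filter fun m =>
    ∀ j, j ≤ k → j ≤ ∑ i ∈ Finset.univ.filter (fun i : Fin k => (i : ℕ) < j), m i

def gg (nn : ℕ → ℕ) (k s : ℕ) : ℕ :=
  ∑ m ∈ gset k s, ∏ i : Fin k, (nn (i : ℕ) + 1).choose (m i)

lemma pref_full (k s : ℕ) (m : Fin k → ℕ) (hm : ∑ i, m i = s) :
    ∑ i ∈ Finset.univ.filter (fun i : Fin k => (i : ℕ) < k), m i = s := by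
  rw [filter_true_of_mem (fun i _ => i.isLt), hm]

lemma gg_eq_zero (nn : ℕ → ℕ) (k s : ℕ) (h : s < k) : gg nn k s = 0 := by
  unfold gg
  apply sum_eq_zero
  intro m hm
  rw [gset, mem_filter, Finset.Nat.mem_antidiagonalTuple] at hm
  exact absurd (le_trans (hm.2 k le_rfl) (le_of_eq (pref_full k s m hm.1))) (by omega)

lemma gg_self (nn : ℕ → ℕ) (k : ℕ) : gg nn k k = lagd k nn := by
  unfold gg lagd
  congr 1
  unfold gset lagM
  ext m
  simp only [mem_filter, Finset.Nat.mem_antidiagonalTuple]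
  constructor
  · rintro ⟨h1, h2⟩; exact ⟨h1, fun j hj => h2 j (le_of_lt hj)⟩
  · rintro ⟨h1, h2⟩
    refine ⟨h1, fun j hj => ?_⟩
    rcases eq_or_lt_of_le hj with rfl | hj'
    · exact le_of_eq (pref_full _ _ m h1).symm
    · exact h2 j hj'

lemma gg_vanish (nn : ℕ → ℕ) (k s : ℕ) (h : (∑ t ∈ range k, nn t) + k < s) :
    gg nn k s = 0 := by
  unfold gg
  apply sum_eq_zero
  intro m hm
  rw [gset, mem_filter, Finset.Nat.mem_antidiagonalTuple] at hm
  by_cases hc : ∀ i : Fin k, m i ≤ nn (i : ℕ) + 1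
  · exfalso
    have h1 : s ≤ ∑ i : Fin k, (nn (i : ℕ) + 1) := hm.1 ▸ Finset.sum_le_sum fun i _ => hc i
    have h2 : ∑ i : Fin k, (nn (i : ℕ) + 1) = (∑ t ∈ range k, nn t) + k := by
      rw [Finset.sum_add_distrib]
      simp [Finset.sum_range fun t => nn t]
    omega
  · push_neg at hc
    obtain ⟨i, hi⟩ := hc
    exact prod_eq_zero (mem_univ i) (Nat.choose_eq_zero_of_lt hi)

lemma pref_snoc (k : ℕ) (m' : Fin k → ℕ) (a : ℕ) (j : ℕ) (hj : j ≤ k) :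
    ∑ i ∈ Finset.univ.filter (fun i : Fin (k+1) => (i : ℕ) < j), Fin.snoc m' a i
      = ∑ i ∈ Finset.univ.filter (fun i : Fin k => (i : ℕ) < j), m' i := by
  rw [sum_filter, sum_filter, Fin.sum_univ_castSucc]
  simp [Fin.snoc_castSucc, Fin.snoc_last, Nat.not_lt.mpr hj]

lemma sum_snoc (k : ℕ) (m' : Fin k → ℕ) (a : ℕ) :
    ∑ i : Fin (k+1), Fin.snoc m' a i = (∑ i : Fin k, m' i) + a := by
  rw [Fin.sum_univ_castSucc]
  simp

lemma gg_conv (nn : ℕ → ℕ) (k s : ℕ) :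
    ∑ p ∈ Finset.HasAntidiagonal.antidiagonal s, (nn k + 1).choose p.1 * gg nn k p.2
      = gg nn (k+1) s + (if s = k then lagd k nn else 0) := by
  rcases le_or_gt s k with hs | hs
  · -- small case
    rw [gg_eq_zero nn (k+1) s (by omega), zero_add]
    rcases eq_or_lt_of_le hs with rfl | hsk
    · rw [if_pos rfl]
      rw [Finset.sum_eq_single_of_mem (0, s) (by simp)]
      · simp [gg_self]
      · intro p hp hne
        rw [Finset.HasAntidiagonal.mem_antidiagonal] at hp
        have : p.2 < s := by
          rcases Nat.lt_or_ge p.2 s with h | h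
          · exact h
          · exfalso; apply hne
            have : p.2 = s := by omega
            have : p.1 = 0 := by omega
            exact Prod.ext this ‹p.2 = s›
        rw [gg_eq_zero nn s p.2 this, mul_zero]
    · rw [if_neg (by omega)]
      apply sum_eq_zero
      intro p hp
      rw [Finset.HasAntidiagonal.mem_antidiagonal] at hp
      rw [gg_eq_zero nn k p.2 (by omega), mul_zero]
  · -- main case: bijection
    rw [if_neg (by omega), add_zero]
    unfold gg
    have lhs_eq : ∑ p ∈ Finset.HasAntidiagonal.antidiagonal s, (nn k + 1).choose p.1 * ∑ m ∈ gset k p.2, ∏ i : Fin k, (nn (i:ℕ) + 1).choose (m i)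
        = ∑ p ∈ Finset.HasAntidiagonal.antidiagonal s, ∑ m ∈ gset k p.2, (nn k + 1).choose p.1 * ∏ i : Fin k, (nn (i:ℕ) + 1).choose (m i) :=
      Finset.sum_congr rfl fun p _ => Finset.mul_sum _ _ _
    rw [lhs_eq, Finset.sum_sigma']
    apply Finset.sum_bij (fun (a : Σ _p : ℕ × ℕ, Fin k → ℕ) (_ : a ∈ (Finset.HasAntidiagonal.antidiagonal s).sigma fun p => gset k p.2) => (Fin.snoc a.2 a.1.1 : Fin (k+1) → ℕ))
    · -- maps to
      rintro ⟨p, m'⟩ ha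
      simp only [Finset.mem_sigma] at ha
      obtain ⟨hp, hm'⟩ := ha
      rw [Finset.HasAntidiagonal.mem_antidiagonal] at hp
      rw [gset, mem_filter, Finset.Nat.mem_antidiagonalTuple] at hm'
      rw [gset, mem_filter, Finset.Nat.mem_antidiagonalTuple]
      have hsum : ∑ i : Fin (k+1), (Fin.snoc m' p.1 : Fin (k+1) → ℕ) i = s := by
        rw [sum_snoc, hm'.1, Nat.add_comm]; exact hp
      constructor
      · exact hsum
      · intro j hj
        rcases eq_or_lt_of_le hj with rfl | hj'
        · rw [pref_full _ _ _ hsum]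
          exact hs
        · rw [pref_snoc k m' p.1 j (Nat.lt_succ_iff.mp hj')]
          exact hm'.2 j (Nat.lt_succ_iff.mp hj')
    · -- injective
      rintro ⟨p₁, m₁⟩ h₁ ⟨p₂, m₂⟩ h₂ heq
      simp only [Finset.mem_sigma] at h₁ h₂
      have ha1 : p₁.1 = p₂.1 := by
        have := congrFun heq (Fin.last k)
        simpa [Fin.snoc_last] using this
      have hm : m₁ = m₂ := by
        funext i
        have := congrFun heq i.castSucc
        simpa [Fin.snoc_castSucc] using this
      have e1 : ∑ i : Fin k, m₁ i = p₁.2 :=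
        Finset.Nat.mem_antidiagonalTuple.mp (Finset.mem_filter.mp h₁.2).1
      have e2 : ∑ i : Fin k, m₂ i = p₂.2 :=
        Finset.Nat.mem_antidiagonalTuple.mp (Finset.mem_filter.mp h₂.2).1
      have hb : p₁.2 = p₂.2 := by rw [← e1, ← e2, hm]
      obtain ⟨a₁, b₁⟩ := p₁
      obtain ⟨a₂, b₂⟩ := p₂
      simp only at ha1 hb
      subst ha1; subst hb; subst hm
      rfl
    · -- surjective
      intro m hmem
      rw [gset, mem_filter, Finset.Nat.mem_antidiagonalTuple] at hmem
      have hsum := hmem.1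
      rw [Fin.sum_univ_castSucc] at hsum
      refine ⟨⟨(m (Fin.last k), ∑ i : Fin k, m i.castSucc), Fin.init m⟩, ?_, ?_⟩
      · rw [Finset.mem_sigma]
        constructor
        · rw [Finset.HasAntidiagonal.mem_antidiagonal]
          simpa [Nat.add_comm] using hsum
        · rw [gset, mem_filter, Finset.Nat.mem_antidiagonalTuple]
          refine ⟨rfl, fun j hj => ?_⟩
          have hpref : (∑ i ∈ Finset.univ.filter (fun i : Fin (k+1) => (i : ℕ) < j), m i)
              = ∑ i ∈ Finset.univ.filter (fun i : Fin k => (i : ℕ) < j), Fin.init m i := by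
            conv_lhs => rw [← Fin.snoc_init_self m]
            exact pref_snoc k (Fin.init m) (m (Fin.last k)) j hj
          rw [← hpref]
          exact hmem.2 j (Nat.le_succ_of_le hj)
      · exact Fin.snoc_init_self m
    · -- values
      rintro ⟨p, m'⟩ ha
      rw [Fin.prod_univ_castSucc]
      simp only [Fin.snoc_castSucc, Fin.snoc_last, Fin.val_last, Fin.coe_castSucc]
      ring

noncomputable def GP (nn : ℕ → ℕ) (k : ℕ) : Polynomial ℤ :=
  ∑ s ∈ range ((∑ t ∈ range k, nn t) + k + 1), Polynomial.C (gg nn k s : ℤ) * Polynomial.X ^ s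

lemma coeff_GP (nn : ℕ → ℕ) (k s : ℕ) : (GP nn k).coeff s = (gg nn k s : ℤ) := by
  unfold GP
  rw [Polynomial.finset_sum_coeff]
  simp only [Polynomial.coeff_C_mul, Polynomial.coeff_X_pow, mul_ite, mul_one, mul_zero]
  rw [Finset.sum_ite_eq (range ((∑ t ∈ range k, nn t) + k + 1)) s (fun s' => (gg nn k s' : ℤ))]
  split_ifs with h
  · rfl
  · rw [mem_range, not_lt] at h
    rw [gg_vanish nn k s (by omega)]
    rfl

lemma gg_zero_zero (nn : ℕ → ℕ) : gg nn 0 0 = 1 := by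
  unfold gg gset
  rw [Finset.Nat.antidiagonalTuple_zero_zero]
  rw [filter_true_of_mem (fun m _ => fun j hj => by omega)]
  simp

lemma GP_rec (nn : ℕ → ℕ) (k : ℕ) :
    GP nn (k+1) + Polynomial.C (lagd k nn : ℤ) * Polynomial.X ^ k
      = (Polynomial.X + 1)^(nn k + 1) * GP nn k := by
  ext s
  rw [Polynomial.coeff_add, coeff_GP, Polynomial.coeff_C_mul, Polynomial.coeff_X_pow,
    Polynomial.coeff_mul]
  have h1 : ∑ p ∈ Finset.HasAntidiagonal.antidiagonal s,
      ((Polynomial.X + 1 : Polynomial ℤ)^(nn k + 1)).coeff p.1 * (GP nn k).coeff p.2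
      = ∑ p ∈ Finset.HasAntidiagonal.antidiagonal s, (((nn k + 1).choose p.1 : ℤ) * (gg nn k p.2 : ℤ)) :=
    Finset.sum_congr rfl fun p _ => by rw [Polynomial.coeff_X_add_one_pow, coeff_GP]
  rw [h1]
  have hc := gg_conv nn k s
  have hc' : ((∑ p ∈ Finset.HasAntidiagonal.antidiagonal s, (nn k + 1).choose p.1 * gg nn k p.2 : ℕ) : ℤ)
      = ((gg nn (k+1) s + (if s = k then lagd k nn else 0) : ℕ) : ℤ) := by rw [hc]
  push_cast at hc'
  rw [hc']
  split_ifs <;> ring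

lemma GP_closed (nn : ℕ → ℕ) (ℓ : ℕ) :
    (Polynomial.X + 1 : Polynomial ℤ)^((∑ t ∈ range ℓ, nn t) + ℓ)
      = GP nn ℓ + ∑ i ∈ range ℓ, Polynomial.C (lagd i nn : ℤ) * Polynomial.X ^ i *
          (Polynomial.X + 1)^((∑ t ∈ range ℓ, nn t) - (∑ t ∈ range (i+1), nn t) + (ℓ - 1 - i)) := by
  induction ℓ with
  | zero =>
    simp [GP, gg_zero_zero]
  | succ k ih =>
    have hNk : ∑ t ∈ range (k+1), nn t = (∑ t ∈ range k, nn t) + nn k := Finset.sum_range_succ nn k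
    have e0 : (∑ t ∈ range (k+1), nn t) + (k+1) = ((∑ t ∈ range k, nn t) + k) + (nn k + 1) := by omega
    rw [e0, pow_add, ih, add_mul, Finset.sum_mul, mul_comm _ ((Polynomial.X + 1 : Polynomial ℤ)^(nn k + 1)),
      ← GP_rec nn k, Finset.sum_range_succ]
    have hterm : ∀ i ∈ range k,
        Polynomial.C (lagd i nn : ℤ) * Polynomial.X ^ i *
          (Polynomial.X + 1 : Polynomial ℤ)^((∑ t ∈ range k, nn t) - (∑ t ∈ range (i+1), nn t) + (k - 1 - i)) *
          (Polynomial.X + 1)^(nn k + 1)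
        = Polynomial.C (lagd i nn : ℤ) * Polynomial.X ^ i *
          (Polynomial.X + 1)^((∑ t ∈ range (k+1), nn t) - (∑ t ∈ range (i+1), nn t) + (k - i)) := by
      intro i hi
      have hik : i < k := mem_range.mp hi
      have hmono : (∑ t ∈ range (i+1), nn t) ≤ ∑ t ∈ range k, nn t :=
        Finset.sum_le_sum_of_subset (Finset.range_subset_range.mpr (by omega))
      rw [mul_assoc, ← pow_add]
      congr 2
      omega
    rw [Finset.sum_congr rfl hterm]
    have hlast : (∑ t ∈ range (k+1), nn t) - (∑ t ∈ range (k+1), nn t) + ((k+1) - 1 - k) = 0 := by omega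
    have e2 : ∀ i ∈ range k, (∑ t ∈ range (k+1), nn t) - (∑ t ∈ range (i+1), nn t) + (k - i)
        = (∑ t ∈ range (k+1), nn t) - (∑ t ∈ range (i+1), nn t) + ((k+1) - 1 - i) := by
      intro i hi; have := mem_range.mp hi; omega
    rw [Finset.sum_congr rfl (fun i hi => by rw [e2 i hi])]
    rw [hlast, pow_zero, mul_one]
    ring

lemma coeffN (nn : ℕ → ℕ) (ℓ s : ℕ) :
    (((∑ t ∈ range ℓ, nn t) + ℓ).choose s : ℤ)
      = (gg nn ℓ s : ℤ) + ∑ i ∈ range ℓ, (lagd i nn : ℤ) *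
          (if i ≤ s then
            ((((∑ t ∈ range ℓ, nn t) - (∑ t ∈ range (i+1), nn t) + (ℓ - 1 - i)).choose (s - i) : ℕ) : ℤ)
          else 0) := by
  have h := congrArg (fun p : Polynomial ℤ => p.coeff s) (GP_closed nn ℓ)
  simp only [Polynomial.coeff_X_add_one_pow, Polynomial.coeff_add,
    Polynomial.finset_sum_coeff] at h
  rw [h, coeff_GP]
  congr 1
  refine sum_congr rfl fun i hi => ?_
  rw [show Polynomial.C ((lagd i nn : ℕ) : ℤ) * Polynomial.X ^ i *
        (Polynomial.X + 1)^((∑ t ∈ range ℓ, nn t) - (∑ t ∈ range (i+1), nn t) + (ℓ - 1 - i))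
      = Polynomial.C ((lagd i nn : ℕ) : ℤ) *
        ((Polynomial.X + 1)^((∑ t ∈ range ℓ, nn t) - (∑ t ∈ range (i+1), nn t) + (ℓ - 1 - i))
          * Polynomial.X ^ i) from by ring]
  rw [Polynomial.coeff_C_mul, Polynomial.coeff_mul_X_pow']
  split_ifs with his
  · rw [Polynomial.coeff_X_add_one_pow]
  · rw [mul_zero]

lemma Wprime (nn : ℕ → ℕ) (ℓ : ℕ) (hℓ : 1 ≤ ℓ) :
    (lagd ℓ nn : ℤ)
      + ∑ i ∈ range ℓ, (-1:ℤ)^(ℓ-i) * (((∑ t ∈ range (i+1), nn t) + ℓ).choose (ℓ-i) : ℤ)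
          * (lagd i nn : ℤ) = 0 := by
  set M : ℕ := (∑ t ∈ range ℓ, nn t) + ℓ with hM
  have hM1 : 1 ≤ M := by omega
  -- the alternating combination of the coefficient identities
  have E1 : ∑ j ∈ range (ℓ+1), (-1:ℤ)^j * ((M-1+j).choose j : ℤ) * ((M).choose (ℓ-j) : ℤ) = 0 := by
    have := B1lem (M-1) ℓ hℓ
    rw [show M-1+1 = M from by omega] at this
    exact this
  have E2 : ∑ j ∈ range (ℓ+1), (-1:ℤ)^j * ((M-1+j).choose j : ℤ) * ((M).choose (ℓ-j) : ℤ)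
      = ∑ j ∈ range (ℓ+1), (-1:ℤ)^j * ((M-1+j).choose j : ℤ) *
          ((gg nn ℓ (ℓ-j) : ℤ) + ∑ i ∈ range ℓ, (lagd i nn : ℤ) *
            (if i ≤ ℓ-j then
              ((((∑ t ∈ range ℓ, nn t) - (∑ t ∈ range (i+1), nn t) + (ℓ - 1 - i)).choose (ℓ-j-i) : ℕ) : ℤ)
            else 0)) :=
    sum_congr rfl fun j _ => by rw [← coeffN nn ℓ (ℓ-j)]
  rw [E2] at E1
  -- split the sum
  simp only [mul_add] at E1
  rw [sum_add_distrib] at E1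
  -- first part equals lagd ℓ
  have F1 : ∑ j ∈ range (ℓ+1), (-1:ℤ)^j * ((M-1+j).choose j : ℤ) * (gg nn ℓ (ℓ-j) : ℤ)
      = (lagd ℓ nn : ℤ) := by
    rw [Finset.sum_eq_single 0]
    · simp [Nat.sub_zero, gg_self]
    · intro j hj hj0
      rw [gg_eq_zero nn ℓ (ℓ-j) (by omega), Nat.cast_zero, mul_zero]
    · intro h; exact absurd (mem_range.mpr (by omega)) h
  -- second part
  have F2 : ∑ j ∈ range (ℓ+1), (-1:ℤ)^j * ((M-1+j).choose j : ℤ) *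
        ∑ i ∈ range ℓ, (lagd i nn : ℤ) *
          (if i ≤ ℓ-j then
            ((((∑ t ∈ range ℓ, nn t) - (∑ t ∈ range (i+1), nn t) + (ℓ - 1 - i)).choose (ℓ-j-i) : ℕ) : ℤ)
          else 0)
      = ∑ i ∈ range ℓ, (-1:ℤ)^(ℓ-i) * (((∑ t ∈ range (i+1), nn t) + ℓ).choose (ℓ-i) : ℤ)
          * (lagd i nn : ℤ) := by
    simp only [Finset.mul_sum]
    rw [Finset.sum_comm]
    refine sum_congr rfl fun i hi => ?_
    have hik : i < ℓ := mem_range.mp hi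
    have hmono : (∑ t ∈ range (i+1), nn t) ≤ ∑ t ∈ range ℓ, nn t :=
      Finset.sum_le_sum_of_subset (Finset.range_subset_range.mpr (by omega))
    set T : ℕ := (∑ t ∈ range ℓ, nn t) - (∑ t ∈ range (i+1), nn t) + (ℓ - 1 - i) with hT
    set c : ℕ := (∑ t ∈ range (i+1), nn t) + i with hc
    have step : ∑ j ∈ range (ℓ+1), (-1:ℤ)^j * ((M-1+j).choose j : ℤ) *
          ((lagd i nn : ℤ) * (if i ≤ ℓ-j then ((T.choose (ℓ-j-i) : ℕ) : ℤ) else 0))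
        = (lagd i nn : ℤ) * ∑ j ∈ range ((ℓ-i)+1),
            (-1:ℤ)^j * ((T+c+j).choose j : ℤ) * ((T.choose ((ℓ-i)-j) : ℕ) : ℤ) := by
      rw [Finset.mul_sum]
      calc ∑ j ∈ range (ℓ+1), (-1:ℤ)^j * ((M-1+j).choose j : ℤ) *
              ((lagd i nn : ℤ) * (if i ≤ ℓ-j then ((T.choose (ℓ-j-i) : ℕ) : ℤ) else 0))
          = ∑ j ∈ range ((ℓ-i)+1), (-1:ℤ)^j * ((M-1+j).choose j : ℤ) *
              ((lagd i nn : ℤ) * (if i ≤ ℓ-j then ((T.choose (ℓ-j-i) : ℕ) : ℤ) else 0)) := by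
            refine (Finset.sum_subset (Finset.range_subset_range.mpr (show (ℓ-i)+1 ≤ ℓ+1 by omega)) ?_).symm
            intro j hjmem hjnot
            have h1 := mem_range.mp hjmem
            have h2 : ¬ j < (ℓ-i)+1 := fun hcon => hjnot (mem_range.mpr hcon)
            rw [if_neg (by omega)]
            ring
        _ = _ := by
            refine sum_congr rfl fun j hj => ?_
            have hj' : j ≤ ℓ-i := by have := mem_range.mp hj; omega
            rw [if_pos (by omega), show T+c+j = M-1+j from by omega,
              show ℓ-j-i = (ℓ-i)-j from by omega]
            ring
    rw [step, flem T c (ℓ-i), hc]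
    rw [show (∑ t ∈ range (i+1), nn t) + i + (ℓ-i) = (∑ t ∈ range (i+1), nn t) + ℓ from by omega]
    ring
  rw [F1, F2] at E1
  exact E1

def Sfun (nn : ℕ → ℕ) (ℓ a : ℕ) : ℤ :=
  ∑ i ∈ range (ℓ+1), (-1:ℤ)^(ℓ-i) * (((∑ t ∈ range (i+1), nn t) + a).choose (ℓ-i) : ℤ)
    * (lagd i nn : ℤ)

lemma Sfun_anchor (nn : ℕ → ℕ) (ℓ : ℕ) (hℓ : 1 ≤ ℓ) : Sfun nn ℓ ℓ = 0 := by
  unfold Sfun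
  rw [sum_range_succ]
  have h := Wprime nn ℓ hℓ
  simp only [Nat.sub_self, pow_zero, Nat.choose_zero_right, Nat.cast_one, one_mul, mul_one] at *
  linarith

lemma Sfun_rec (nn : ℕ → ℕ) (ℓ a : ℕ) (hℓ : 1 ≤ ℓ) :
    Sfun nn ℓ (a+1) = Sfun nn ℓ a - Sfun nn (ℓ-1) a := by
  obtain ⟨L, rfl⟩ : ∃ L, ℓ = L+1 := ⟨ℓ-1, by omega⟩
  unfold Sfun
  rw [Nat.add_sub_cancel]
  rw [sum_range_succ, sum_range_succ
    (f := fun i => (-1:ℤ)^(L+1-i) * (((∑ t ∈ range (i+1), nn t) + a).choose (L+1-i) : ℤ) * (lagd i nn : ℤ))]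
  simp only [Nat.sub_self, pow_zero, Nat.choose_zero_right, Nat.cast_one, one_mul, mul_one]
  have key : ∑ i ∈ range (L+1), (-1:ℤ)^(L+1-i) * (((∑ t ∈ range (i+1), nn t) + (a+1)).choose (L+1-i) : ℤ) * (lagd i nn : ℤ)
      = ∑ i ∈ range (L+1), ((-1:ℤ)^(L+1-i) * (((∑ t ∈ range (i+1), nn t) + a).choose (L+1-i) : ℤ) * (lagd i nn : ℤ)
        - (-1:ℤ)^(L-i) * (((∑ t ∈ range (i+1), nn t) + a).choose (L-i) : ℤ) * (lagd i nn : ℤ)) := by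
    refine sum_congr rfl fun i hi => ?_
    have hiL : i < L+1 := mem_range.mp hi
    have e : L+1-i = (L-i)+1 := by omega
    rw [e, show (∑ t ∈ range (i+1), nn t) + (a+1) = ((∑ t ∈ range (i+1), nn t) + a) + 1 from by omega,
      Nat.choose_succ_succ, pow_succ]
    push_cast
    ring
  rw [key, sum_sub_distrib]
  ring

lemma Sfun_zero (nn : ℕ → ℕ) : ∀ ℓ, 1 ≤ ℓ → ∀ b, b ≤ ℓ - 1 → Sfun nn ℓ (ℓ - b) = 0 := by
  intro ℓ
  induction ℓ with
  | zero => omega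
  | succ L ihL =>
    intro _ b
    induction b with
    | zero => intro _; simpa using Sfun_anchor nn (L+1) (by omega)
    | succ b ihb =>
      intro hb
      have hrec := Sfun_rec nn (L+1) (L+1-(b+1)) (by omega)
      rw [show (L+1-(b+1))+1 = L+1-b from by omega, Nat.add_sub_cancel] at hrec
      have h1 : Sfun nn (L+1) (L+1-b) = 0 := ihb (by omega)
      have h2 : Sfun nn L (L+1-(b+1)) = 0 := by
        rw [show L+1-(b+1) = L - b from by omega]
        exact ihL (by omega) b (by omega)
      rw [h1] at hrec
      linarith

/-- The Lagrange coefficients satisfy the alternating-sign recursion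
`d_ℓ(n_1,...,n_ℓ) = ∑_{i=0}^{ℓ-1} (−1)^{ℓ−1−i} C(n_1+⋯+n_{i+1}+1, ℓ−i) ·
 d_i(n_1,...,n_i)` for all `ℓ ≥ 1` and positive integers `n_1,...,n_ℓ`. -/
theorem lagrange_coefficient_alternating_recursion (ℓ : ℕ) (hℓ : 1 ≤ ℓ)
    (nn : ℕ → ℕ) (hpos : ∀ i, 0 < nn i) :
    (lagd ℓ nn : ℤ) = ∑ i ∈ Finset.range ℓ,
      (-1 : ℤ) ^ (ℓ - 1 - i) *
        ((∑ t ∈ Finset.range (i + 1), nn t) + 1).choose (ℓ - i) * lagd i nn := by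
  have h := Sfun_zero nn ℓ hℓ (ℓ-1) le_rfl
  rw [show ℓ - (ℓ-1) = 1 from by omega] at h
  unfold Sfun at h
  rw [sum_range_succ] at h
  simp only [Nat.sub_self, pow_zero, Nat.choose_zero_right, Nat.cast_one, one_mul, mul_one] at h
  have key : ∑ i ∈ range ℓ, (-1:ℤ)^(ℓ-1-i) *
        (((∑ t ∈ range (i+1), nn t) + 1).choose (ℓ-i) : ℤ) * (lagd i nn : ℤ)
      = - ∑ i ∈ range ℓ, (-1:ℤ)^(ℓ-i) *
        (((∑ t ∈ range (i+1), nn t) + 1).choose (ℓ-i) : ℤ) * (lagd i nn : ℤ) := by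
    rw [← Finset.sum_neg_distrib]
    refine sum_congr rfl fun i hi => ?_
    have he : ℓ - i = (ℓ-1-i)+1 := by have := mem_range.mp hi; omega
    rw [he, pow_succ]
    ring
  rw [key]
  linarith
end

section
/- The Lagrange coefficients satisfy the recursion d_ℓ(n_1,...,n_ℓ) = ∑_{i=1}^{ℓ} (−1)^{i−1} C(n_1+1, i) · d_{ℓ−i}(n_1+⋯+n_{i+1}, n_{i+2},...,n_ℓ) for all ℓ ≥ 1 and positive integers n_1,...,n_{ℓ+1} (where for i = ℓ the d-factor is d_0 = 1). -/
namespace LagAux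
open Finset


open Finset

/-- Multi-variable Vandermonde. -/
lemma multiVan {ι : Type*} [DecidableEq ι] (s : Finset ι) (c : ι → ℕ) (n : ℕ) :
    ∑ f ∈ s.piAntidiag n, ∏ i ∈ s, (c i).choose (f i) = (∑ i ∈ s, c i).choose n := by
  induction s using Finset.cons_induction generalizing n with
  | empty =>
      rcases Nat.eq_zero_or_pos n with rfl | hn
      · simp
      · rw [Finset.piAntidiag_empty_of_ne_zero hn.ne']
        simp [Nat.choose_eq_zero_of_lt hn]
  | cons i s hi ih =>
      rw [Finset.piAntidiag_cons hi, Finset.sum_disjiUnion]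
      rw [Finset.sum_cons, Nat.add_choose_eq]
      refine Finset.sum_congr rfl fun p hp => ?_
      rw [Finset.sum_map]
      have : ∀ g ∈ s.piAntidiag p.2,
          ∏ j ∈ Finset.cons i s hi, (c j).choose ((addRightEmbedding fun t => if t = i then p.1 else 0) g j)
            = (c i).choose p.1 * ∏ j ∈ s, (c j).choose (g j) := by
        intro g hg
        rw [Finset.mem_piAntidiag] at hg
        rw [Finset.prod_cons]
        have hgi : g i = 0 := by
          by_contra h
          exact hi (hg.2 i h)
        congr 1
        · simp [addRightEmbedding, hgi]
        · refine Finset.prod_congr rfl fun j hj => ?_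
          have : j ≠ i := fun h => hi (h ▸ hj)
          simp [addRightEmbedding, this]
      rw [Finset.sum_congr rfl this, ← Finset.mul_sum, ih]

open Finset

private lemma pascal' (x y : ℕ) (hy : 0 < y) :
    (x+1).choose y = x.choose (y-1) + x.choose y := by
  cases y with
  | zero => omega
  | succ y => rw [Nat.choose_succ_succ]; simp

lemma altVan (b k : ℕ) : ∀ a : ℕ,
    ∑ i ∈ range (k+1), (-1:ℤ)^i * (a.choose i) * ((a + b - i).choose (k - i)) = (b.choose k : ℤ) := by
  intro a
  induction a with
  | zero =>
      rw [Finset.sum_eq_single 0]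
      · simp
      · intro i _ hi
        rw [Nat.choose_eq_zero_of_lt (Nat.pos_of_ne_zero hi)]
        simp
      · simp
  | succ a ih =>
      have key : ∀ i ∈ range (k+1),
          (-1:ℤ)^i * ((a+1).choose i) * ((a + 1 + b - i).choose (k - i))
          = ((-1:ℤ)^i * (a.choose i) * ((a + b - i).choose (k - i))
              + (if i < k then (-1:ℤ)^i * (a.choose i) * ((a + b - i).choose (k - 1 - i)) else 0))
            + (if 1 ≤ i then (-1:ℤ)^i * (a.choose (i-1)) * ((a + 1 + b - i).choose (k - i)) else 0) := by
        intro i hi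
        rw [mem_range] at hi
        rcases Nat.eq_zero_or_pos i with rfl | hi1
        · simp only [if_neg (by omega : ¬ (1:ℕ) ≤ 0)]
          rcases Nat.lt_or_ge 0 k with hk | hk
          · rw [if_pos hk]
            simp only [Nat.sub_zero]
            have h1 : a + 1 + b = (a + b) + 1 := by omega
            rw [h1, pascal' (a+b) k hk]
            push_cast
            simp
            ring
          · interval_cases k
            simp
        · -- i ≥ 1
          rw [if_pos (show (1:ℕ) ≤ i from hi1)]
          have hcs : ((a+1).choose i : ℤ) = (a.choose (i-1) : ℤ) + (a.choose i : ℤ) := by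
            rw [pascal' a i hi1]; push_cast; ring
          rcases Nat.lt_or_ge i k with hik | hik
          · rw [if_pos hik]
            rcases le_or_gt i (a + b) with hab | hab
            · have h1 : a + 1 + b - i = (a + b - i) + 1 := by omega
              have h2 : (a+b-i).choose ((k-i) - 1) = (a+b-i).choose (k-1-i) := by
                congr 1; omega
              rw [h1, pascal' (a+b-i) (k-i) (by omega), h2, hcs]
              push_cast
              ring
            · have hia : a < i := by omega
              have h0 : a + b - i = 0 := by omega
              rw [h0, Nat.choose_eq_zero_of_lt hia,
                Nat.choose_eq_zero_of_lt (by omega : 0 < k - i), hcs,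
                Nat.choose_eq_zero_of_lt hia]
              push_cast
              ring
          · -- i = k
            have hik' : i = k := by omega
            subst hik'
            rw [if_neg (lt_irrefl _)]
            simp only [Nat.sub_self, Nat.choose_zero_right]
            rw [hcs]
            push_cast
            ring
      rw [Finset.sum_congr rfl key, Finset.sum_add_distrib, Finset.sum_add_distrib, ih]
      have e2 : ∑ i ∈ range (k+1), (if i < k then (-1:ℤ)^i * (a.choose i) * ((a + b - i).choose (k - 1 - i)) else 0)
          = ∑ i ∈ range k, (-1:ℤ)^i * (a.choose i) * ((a + b - i).choose (k - 1 - i)) := by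
        rw [Finset.sum_range_succ, if_neg (lt_irrefl _), add_zero]
        exact Finset.sum_congr rfl fun i hi => if_pos (mem_range.mp hi)
      have e3 : ∑ i ∈ range (k+1), (if 1 ≤ i then (-1:ℤ)^i * (a.choose (i-1)) * ((a + 1 + b - i).choose (k - i)) else 0)
          = - ∑ i ∈ range k, (-1:ℤ)^i * (a.choose i) * ((a + b - i).choose (k - 1 - i)) := by
        rw [Finset.sum_range_succ']
        simp only [if_neg (by omega : ¬ (1:ℕ) ≤ 0), add_zero]
        rw [← Finset.sum_neg_distrib]
        refine Finset.sum_congr rfl fun i _ => ?_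
        rw [if_pos (by omega : 1 ≤ i + 1)]
        have h1 : a + 1 + b - (i+1) = a + b - i := by omega
        have h2 : k - (i+1) = k - 1 - i := by omega
        have h3 : i + 1 - 1 = i := by omega
        rw [h1, h2, h3, pow_succ]
        ring
      rw [e2, e3]
      ring

open Finset

def extFun (ℓ : ℕ) (m : Fin ℓ → ℕ) : ℕ → ℕ := fun r => if h : r < ℓ then m ⟨r, h⟩ else 0

lemma extFun_coe (ℓ : ℕ) (m : Fin ℓ → ℕ) (i : Fin ℓ) : extFun ℓ m i = m i := by
  simp [extFun]

lemma psum_ext (ℓ j : ℕ) (m : Fin ℓ → ℕ) :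
    ∑ i ∈ Finset.univ.filter (fun i : Fin ℓ => (i : ℕ) < j), m i
      = ∑ r ∈ range j, extFun ℓ m r := by
  rw [Finset.sum_filter]
  have h1 : ∀ i : Fin ℓ, (if (i:ℕ) < j then m i else 0)
      = (fun r => if r < j then extFun ℓ m r else 0) (i : ℕ) := by
    intro i; simp [extFun_coe]
  rw [Finset.sum_congr rfl (fun i _ => h1 i),
    Fin.sum_univ_eq_sum_range (fun r => if r < j then extFun ℓ m r else 0) ℓ]
  have h2 : ∑ r ∈ range ℓ, (if r < j then extFun ℓ m r else 0)
      = ∑ r ∈ range (ℓ + j), (if r < j then extFun ℓ m r else 0) := by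
    refine Finset.sum_subset (Finset.range_subset_range.mpr (by omega)) fun r _ hr => ?_
    rw [mem_range, not_lt] at hr
    simp [extFun, if_neg, Nat.not_lt.mpr, dif_neg (by omega : ¬ r < ℓ)]
  have h3 : ∑ r ∈ range j, extFun ℓ m r
      = ∑ r ∈ range (ℓ + j), (if r < j then extFun ℓ m r else 0) := by
    rw [← Finset.sum_filter]
    apply Finset.sum_congr
    · ext r; simp [mem_filter, mem_range]; omega
    · intros; rfl
  rw [h2, ← h3]

lemma sum_ext_all (ℓ : ℕ) (m : Fin ℓ → ℕ) :
    ∑ r ∈ range ℓ, extFun ℓ m r = ∑ i, m i := by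
  rw [← Fin.sum_univ_eq_sum_range]
  exact Finset.sum_congr rfl fun i _ => extFun_coe ℓ m i

lemma lagd_eq (ℓ : ℕ) (nn : ℕ → ℕ) :
    lagd ℓ nn = ∑ f ∈ (Finset.piAntidiag (range ℓ) ℓ).filter
        (fun f => ∀ j, j < ℓ → j ≤ ∑ r ∈ range j, f r),
      ∏ r ∈ range ℓ, (nn r + 1).choose (f r) := by
  rw [lagd]
  refine Finset.sum_nbij' (extFun ℓ) (fun f (i : Fin ℓ) => f i) ?_ ?_ ?_ ?_ ?_
  · intro m hm
    rw [lagM, mem_filter, Finset.Nat.mem_antidiagonalTuple] at hm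
    rw [mem_filter, mem_piAntidiag]
    refine ⟨⟨by rw [sum_ext_all]; exact hm.1, ?_⟩, ?_⟩
    · intro r hr
      rw [mem_range]
      by_contra h
      exact hr (by simp [extFun, dif_neg h])
    · intro j hj
      rw [← psum_ext]
      exact hm.2 j hj
  · intro f hf
    rw [mem_filter, mem_piAntidiag] at hf
    rw [lagM, mem_filter, Finset.Nat.mem_antidiagonalTuple]
    constructor
    · rw [Fin.sum_univ_eq_sum_range (fun r => f r) ℓ]
      exact hf.1.1
    · intro j hj
      rw [psum_ext]
      refine le_trans (hf.2 j hj) (le_of_eq (Finset.sum_congr rfl fun r hr => ?_))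
      rw [mem_range] at hr
      simp [extFun, dif_pos (lt_of_lt_of_le hr (le_of_lt hj) : r < ℓ)]
  · intro m _; funext i; simp [extFun_coe]
  · intro f hf
    rw [mem_filter, mem_piAntidiag] at hf
    funext r
    by_cases h : r < ℓ
    · simp [extFun, dif_pos h]
    · simp only [extFun, dif_neg h]
      by_contra h2
      exact h (mem_range.mp (hf.1.2 r (Ne.symm h2)))
  · intro m _
    rw [← Fin.prod_univ_eq_prod_range (fun r => (nn r + 1).choose (extFun ℓ m r)) ℓ]
    exact Finset.prod_congr rfl fun i _ => by rw [extFun_coe]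

open Finset

section
variable (ℓ : ℕ)

/-- first failure classifier -/
noncomputable def ffail (ℓ : ℕ) (f : ℕ → ℕ) : ℕ :=
  if h : ∃ j, j < ℓ + 1 ∧ ∑ r ∈ range j, f r < j then Nat.find h else 0

lemma ffail_le (ℓ : ℕ) (f : ℕ → ℕ) : ffail ℓ f ≤ ℓ := by
  rw [ffail]
  split
  · next h => have := (Nat.find_spec h).1; omega
  · omega

lemma ffail_eq_iff (ℓ : ℕ) (f : ℕ → ℕ) (j : ℕ) (hj1 : 1 ≤ j) (hjℓ : j ≤ ℓ) :
    ffail ℓ f = j ↔ ((∑ r ∈ range j, f r < j) ∧ ∀ u, u < j → u ≤ ∑ r ∈ range u, f r) := by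
  constructor
  · intro h
    rw [ffail] at h
    split at h
    · next hex =>
        subst h
        refine ⟨(Nat.find_spec hex).2, fun u hu => ?_⟩
        have := Nat.find_min hex hu
        push_neg at this
        by_contra hc
        push_neg at hc
        exact absurd hc (not_lt.mpr (this (by omega)))
    · omega
  · rintro ⟨h1, h2⟩
    have hex : ∃ j, j < ℓ + 1 ∧ ∑ r ∈ range j, f r < j := ⟨j, by omega, h1⟩
    rw [ffail, dif_pos hex]
    rw [Nat.find_eq_iff]
    refine ⟨⟨by omega, h1⟩, fun u hu => ?_⟩
    rintro ⟨-, hlt⟩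
    exact absurd (h2 u hu) (by omega)

lemma ffail_eq_zero_iff (ℓ : ℕ) (f : ℕ → ℕ) (hf : ∑ r ∈ range ℓ, f r = ℓ) :
    ffail ℓ f = 0 ↔ ∀ j, j < ℓ → j ≤ ∑ r ∈ range j, f r := by
  constructor
  · intro h j hj
    rw [ffail] at h
    split at h
    · next hex =>
        exfalso
        have hs := Nat.find_spec hex
        rw [h] at hs
        simp at hs
    · next hex =>
        push_neg at hex
        by_contra hc
        push_neg at hc
        exact absurd hc (not_lt.mpr (hex j (by omega)))
  · intro h
    rw [ffail, dif_neg]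
    rintro ⟨j, hj, hlt⟩
    rcases Nat.lt_or_ge j ℓ with hc | hc
    · exact absurd (h j hc) (by omega)
    · have : j = ℓ := by omega
      subst this
      omega
end

lemma sum_split (a b : ℕ) (h : a ≤ b) (f : ℕ → ℕ) :
    ∑ r ∈ range b, f r = ∑ r ∈ range a, f r + ∑ r ∈ Ico a b, f r := by
  rw [Finset.sum_range_add_sum_Ico _ h]

lemma prod_split (a b : ℕ) (h : a ≤ b) (f : ℕ → ℕ) :
    ∏ r ∈ range b, f r = (∏ r ∈ range a, f r) * ∏ r ∈ Ico a b, f r := by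
  rw [Finset.prod_range_mul_prod_Ico _ h]

lemma fiber_key (ℓ j : ℕ) (nn : ℕ → ℕ) (hj1 : 1 ≤ j) (hjℓ : j ≤ ℓ) :
    ∑ f ∈ (Finset.piAntidiag (range ℓ) ℓ).filter (fun f => ffail ℓ f = j),
        ∏ r ∈ range ℓ, (nn r + 1).choose (f r)
      = ∑ p ∈ ((Finset.piAntidiag (range (j-1)) (j-1)).filter
            (fun f => ∀ u, u < j-1 → u ≤ ∑ r ∈ range u, f r))
          ×ˢ (Finset.piAntidiag (range (ℓ-j)) (ℓ-j+1)),
        (∏ r ∈ range (j-1), (nn r + 1).choose (p.1 r))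
          * ∏ t ∈ range (ℓ-j), (nn (j+t) + 1).choose (p.2 t) := by
  refine Finset.sum_nbij'
    (fun f => (fun r => if r < j - 1 then f r else 0, fun t => f (j + t)))
    (fun p => fun r => if r < j then p.1 r else p.2 (r - j)) ?_ ?_ ?_ ?_ ?_
  · -- forward membership
    intro f hf
    rw [Finset.mem_filter, Finset.mem_piAntidiag] at hf
    obtain ⟨⟨hsum, hsupp⟩, hff⟩ := hf
    have hsum' : ∑ r ∈ range ℓ, f r = ℓ := hsum
    rw [ffail_eq_iff ℓ f j hj1 hjℓ] at hff
    obtain ⟨hlt, hgood⟩ := hff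
    have hj1' : j - 1 + 1 = j := by omega
    have h1 : ∑ r ∈ range j, f r = ∑ r ∈ range (j-1), f r + f (j-1) := by
      conv_lhs => rw [← hj1']
      rw [Finset.sum_range_succ]
    have h2 := hgood (j-1) (by omega)
    have hSj1 : ∑ r ∈ range (j-1), f r = j - 1 := by omega
    have hfj1 : f (j - 1) = 0 := by omega
    have hSj : ∑ r ∈ range j, f r = j - 1 := by omega
    have hIco : ∑ r ∈ Ico j ℓ, f r = ℓ - j + 1 := by
      have h3 := sum_split j ℓ hjℓ f
      omega
    rw [Finset.mem_product]
    constructor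
    · rw [Finset.mem_filter, Finset.mem_piAntidiag]
      refine ⟨⟨?_, ?_⟩, ?_⟩
      · have : ∑ r ∈ range (j-1), (if r < j - 1 then f r else 0) = ∑ r ∈ range (j-1), f r :=
          Finset.sum_congr rfl fun r hr => if_pos (mem_range.mp hr)
        rw [this]
        exact hSj1
      · intro r hr
        rw [mem_range]
        by_contra hc
        exact hr (if_neg (by omega))
      · intro u hu
        have : ∑ r ∈ range u, (if r < j - 1 then f r else 0) = ∑ r ∈ range u, f r :=
          Finset.sum_congr rfl fun r hr => if_pos (by have := mem_range.mp hr; omega)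
        rw [this]
        exact hgood u (by omega)
    · rw [Finset.mem_piAntidiag]
      constructor
      · rw [← Finset.sum_Ico_eq_sum_range]
        exact hIco
      · intro t ht
        rw [mem_range]
        have := hsupp (j + t) ht
        rw [mem_range] at this
        omega
  · -- backward membership
    rintro ⟨p1, p2⟩ hp
    dsimp only
    rw [Finset.mem_product, Finset.mem_filter, Finset.mem_piAntidiag, Finset.mem_piAntidiag] at hp
    obtain ⟨⟨⟨hp1sum, hp1supp⟩, hp1good⟩, hp2sum, hp2supp⟩ := hp
    have hp1sum' : ∑ r ∈ range (j-1), p1 r = j - 1 := hp1sum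
    have hp2sum' : ∑ t ∈ range (ℓ-j), p2 t = ℓ - j + 1 := hp2sum
    have hp1j1 : p1 (j-1) = 0 := by
      by_contra hc
      have := hp1supp _ hc
      rw [mem_range] at this
      omega
    have hsumj : ∀ u, u ≤ j → ∑ r ∈ range u, (if r < j then p1 r else p2 (r - j))
        = ∑ r ∈ range u, p1 r := fun u hu =>
      Finset.sum_congr rfl fun r hr => if_pos (by have := mem_range.mp hr; omega)
    have hSj : ∑ r ∈ range j, p1 r = j - 1 := by
      have hj1' : j - 1 + 1 = j := by omega
      have h1 : ∑ r ∈ range j, p1 r = ∑ r ∈ range (j-1), p1 r + p1 (j-1) := by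
        conv_lhs => rw [← hj1']
        rw [Finset.sum_range_succ]
      omega
    rw [Finset.mem_filter, Finset.mem_piAntidiag]
    refine ⟨⟨?_, ?_⟩, ?_⟩
    · have h2 : ∑ r ∈ Ico j ℓ, (if r < j then p1 r else p2 (r - j)) = ∑ t ∈ range (ℓ - j), p2 t := by
        rw [Finset.sum_Ico_eq_sum_range]
        refine Finset.sum_congr rfl fun t _ => ?_
        rw [if_neg (by omega)]
        congr 1
        omega
      have h3 := sum_split j ℓ hjℓ (fun r => if r < j then p1 r else p2 (r - j))
      rw [h3, hsumj j le_rfl, hSj, h2, hp2sum']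
      omega
    · intro r hr
      rw [mem_range]
      by_cases h : r < j
      · omega
      · rw [if_neg h] at hr
        have := hp2supp _ hr
        rw [mem_range] at this
        omega
    · rw [ffail_eq_iff ℓ _ j hj1 hjℓ]
      constructor
      · rw [hsumj j le_rfl, hSj]
        omega
      · intro u hu
        rw [hsumj u (by omega)]
        rcases Nat.lt_or_ge u (j-1) with hc | hc
        · exact hp1good u hc
        · have : u = j - 1 := by omega
          subst this
          rw [hp1sum']
  · -- left inverse
    intro f hf
    dsimp only
    rw [Finset.mem_filter, Finset.mem_piAntidiag] at hf
    obtain ⟨⟨hsum, hsupp⟩, hff⟩ := hf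
    have hsum' : ∑ r ∈ range ℓ, f r = ℓ := hsum
    rw [ffail_eq_iff ℓ f j hj1 hjℓ] at hff
    obtain ⟨hlt, hgood⟩ := hff
    have hj1' : j - 1 + 1 = j := by omega
    have h1 : ∑ r ∈ range j, f r = ∑ r ∈ range (j-1), f r + f (j-1) := by
      conv_lhs => rw [← hj1']
      rw [Finset.sum_range_succ]
    have h2 := hgood (j-1) (by omega)
    have hfj1 : f (j - 1) = 0 := by omega
    funext r
    by_cases h : r < j
    · by_cases h2 : r < j - 1
      · simp [h, h2]
      · have : r = j - 1 := by omega
        subst this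
        simp [h, h2, hfj1]
    · simp only [if_neg h]
      congr 1
      omega
  · -- right inverse
    rintro ⟨p1, p2⟩ hp
    dsimp only
    rw [Finset.mem_product, Finset.mem_filter, Finset.mem_piAntidiag, Finset.mem_piAntidiag] at hp
    obtain ⟨⟨⟨hp1sum, hp1supp⟩, hp1good⟩, hp2sum, hp2supp⟩ := hp
    have hp1sum' : ∑ r ∈ range (j-1), p1 r = j - 1 := hp1sum
    have hp2sum' : ∑ t ∈ range (ℓ-j), p2 t = ℓ - j + 1 := hp2sum
    have hp1z : ∀ r, ¬ r < j - 1 → p1 r = 0 := by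
      intro r hr
      by_contra hc
      have := hp1supp _ hc
      rw [mem_range] at this
      omega
    have e1 : (fun r => if r < j - 1 then (if r < j then p1 r else p2 (r - j)) else 0) = p1 := by
      funext x
      by_cases h : x < j - 1
      · rw [if_pos h, if_pos (by omega)]
      · rw [if_neg h, hp1z x h]
    have e2 : (fun t => if j + t < j then p1 (j + t) else p2 (j + t - j)) = p2 := by
      funext t
      rw [if_neg (by omega)]
      congr 1
      omega
    simp only [Prod.mk.injEq]
    exact ⟨e1, e2⟩
  · -- summand equality
    intro f hf
    dsimp only
    rw [Finset.mem_filter, Finset.mem_piAntidiag] at hf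
    obtain ⟨⟨hsum, hsupp⟩, hff⟩ := hf
    have hsum' : ∑ r ∈ range ℓ, f r = ℓ := hsum
    rw [ffail_eq_iff ℓ f j hj1 hjℓ] at hff
    obtain ⟨hlt, hgood⟩ := hff
    have hj1' : j - 1 + 1 = j := by omega
    have h1 : ∑ r ∈ range j, f r = ∑ r ∈ range (j-1), f r + f (j-1) := by
      conv_lhs => rw [← hj1']
      rw [Finset.sum_range_succ]
    have h2 := hgood (j-1) (by omega)
    have hfj1 : f (j - 1) = 0 := by omega
    rw [prod_split j ℓ hjℓ]
    have hpre : ∏ r ∈ range j, (nn r + 1).choose (f r)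
        = ∏ r ∈ range (j-1), (nn r + 1).choose (if r < j - 1 then f r else 0) := by
      conv_lhs => rw [← hj1']
      rw [Finset.prod_range_succ, hfj1, Nat.choose_zero_right, mul_one]
      exact Finset.prod_congr rfl fun r hr => by rw [if_pos (mem_range.mp hr)]
    rw [hpre, Finset.prod_Ico_eq_prod_range]
  
lemma fiber_sum (ℓ j : ℕ) (nn : ℕ → ℕ) (hj1 : 1 ≤ j) (hjℓ : j ≤ ℓ) :
    ∑ f ∈ (Finset.piAntidiag (range ℓ) ℓ).filter (fun f => ffail ℓ f = j),
        ∏ r ∈ range ℓ, (nn r + 1).choose (f r)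
      = lagd (j-1) nn * ((∑ r ∈ Ico j ℓ, (nn r + 1)).choose (ℓ - j + 1)) := by
  rw [fiber_key ℓ j nn hj1 hjℓ, Finset.sum_product]
  have hsuf : ((∑ r ∈ Ico j ℓ, (nn r + 1)).choose (ℓ - j + 1))
      = ∑ h ∈ Finset.piAntidiag (range (ℓ - j)) (ℓ - j + 1),
          ∏ t ∈ range (ℓ - j), (nn (j + t) + 1).choose (h t) := by
    rw [multiVan, Finset.sum_Ico_eq_sum_range]
  rw [hsuf, lagd_eq, Finset.sum_mul_sum]

lemma lagd_zero (nn : ℕ → ℕ) : lagd 0 nn = 1 := by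
  rw [lagd_eq]
  rw [show range 0 = (∅ : Finset ℕ) from rfl, Finset.piAntidiag_empty_zero]
  rw [Finset.filter_true_of_mem (fun f _ => by omega)]
  simp

lemma tailT (ℓ : ℕ) (nn : ℕ → ℕ) :
    (∑ r ∈ range ℓ, (nn r + 1)).choose ℓ
      = lagd ℓ nn + ∑ j ∈ Icc 1 ℓ,
          lagd (j-1) nn * ((∑ r ∈ Ico j ℓ, (nn r + 1)).choose (ℓ - j + 1)) := by
  rw [← multiVan (range ℓ) (fun r => nn r + 1) ℓ]
  rw [← Finset.sum_fiberwise_of_maps_to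
    (g := ffail ℓ) (t := range (ℓ+1))
    (fun f _ => mem_range.mpr (by have := ffail_le ℓ f; omega))
    (fun f => ∏ r ∈ range ℓ, (nn r + 1).choose (f r))]
  rw [Finset.sum_range_succ']
  rw [add_comm]
  congr 1
  · -- fiber 0 is lagd
    have hset : (Finset.piAntidiag (range ℓ) ℓ).filter (fun f => ffail ℓ f = 0)
        = (Finset.piAntidiag (range ℓ) ℓ).filter
            (fun f => ∀ j, j < ℓ → j ≤ ∑ r ∈ range j, f r) := by
      refine Finset.filter_congr fun f hf => ?_
      rw [Finset.mem_piAntidiag] at hf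
      exact ffail_eq_zero_iff ℓ f hf.1
    rw [hset, ← lagd_eq]
  · -- other fibers
    rw [← Finset.Ico_add_one_right_eq_Icc, Finset.sum_Ico_eq_sum_range]
    have e0 : ℓ + 1 - 1 = ℓ := by omega
    rw [e0]
    refine Finset.sum_congr rfl fun t ht => ?_
    rw [mem_range] at ht
    simp only [Nat.one_add]
    have e : t + 1 - 1 = t := Nat.succ_sub_one t
    rw [e]
    exact fiber_sum ℓ (t+1) nn (by omega) (by omega)

lemma mm_sum_range (ℓ i : ℕ) (nn : ℕ → ℕ) (h2 : i < ℓ) :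
    ∑ t ∈ range (ℓ - i), ((if t = 0 then ∑ r ∈ range (i+1), nn r else nn (i + t)) + 1)
      = (∑ r ∈ range ℓ, (nn r + 1)) - i := by
  have hbot : ∑ t ∈ range (ℓ - i), ((if t = 0 then ∑ r ∈ range (i+1), nn r else nn (i + t)) + 1)
      = (∑ r ∈ range (i+1), nn r + 1)
        + ∑ t ∈ Ico 1 (ℓ - i), ((if t = 0 then ∑ r ∈ range (i+1), nn r else nn (i + t)) + 1) := by
    rw [range_eq_Ico, Finset.sum_eq_sum_Ico_succ_bot (by omega : 0 < ℓ - i)]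
    simp
  have hinner : ∑ t ∈ Ico 1 (ℓ - i), ((if t = 0 then ∑ r ∈ range (i+1), nn r else nn (i + t)) + 1)
      = ∑ k ∈ range (ℓ - (i+1)), (nn ((i+1) + k) + 1) := by
    rw [Finset.sum_Ico_eq_sum_range, Nat.sub_sub]
    refine Finset.sum_congr rfl fun k _ => ?_
    rw [if_neg (by omega)]
    congr 2
    omega
  have hsplit := sum_split (i+1) ℓ (by omega) (fun r => nn r + 1)
  have hIco : ∑ r ∈ Ico (i+1) ℓ, (nn r + 1) = ∑ k ∈ range (ℓ - (i+1)), (nn ((i+1) + k) + 1) :=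
    Finset.sum_Ico_eq_sum_range _ _ _
  have hhead : ∑ r ∈ range (i+1), (nn r + 1) = (∑ r ∈ range (i+1), nn r) + (i+1) := by
    rw [Finset.sum_add_distrib, Finset.sum_const, card_range, smul_eq_mul, mul_one]
  omega

lemma mm_sum_Ico (ℓ i j' : ℕ) (nn : ℕ → ℕ) (hj'1 : 1 ≤ j') :
    ∑ t ∈ Ico j' (ℓ - i), ((if t = 0 then ∑ r ∈ range (i+1), nn r else nn (i + t)) + 1)
      = ∑ r ∈ Ico (i + j') ℓ, (nn r + 1) := by
  rw [Finset.sum_Ico_eq_sum_range, Finset.sum_Ico_eq_sum_range]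
  have e : ℓ - i - j' = ℓ - (i + j') := by omega
  rw [e]
  refine Finset.sum_congr rfl fun k _ => ?_
  rw [if_neg (by omega)]
  congr 2
  omega

lemma key2 (ℓ i : ℕ) (nn : ℕ → ℕ) (h1 : 1 ≤ i) (h2 : i ≤ ℓ) :
    (lagd (ℓ - i) (fun t => if t = 0 then ∑ r ∈ range (i+1), nn r else nn (i + t)) : ℤ)
      = (((∑ r ∈ range ℓ, (nn r + 1)) - i).choose (ℓ - i) : ℤ)
        - ∑ j ∈ Icc (i+1) ℓ,
            (lagd (j - i - 1) (fun t => if t = 0 then ∑ r ∈ range (i+1), nn r else nn (i + t)) : ℤ)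
              * ((∑ r ∈ Ico j ℓ, (nn r + 1)).choose (ℓ - j + 1) : ℤ) := by
  by_cases hlt : i < ℓ
  · have hT := tailT (ℓ - i) (fun t => if t = 0 then ∑ r ∈ range (i+1), nn r else nn (i + t))
    beta_reduce at hT
    rw [mm_sum_range ℓ i nn hlt] at hT
    have hre : ∑ j ∈ Icc (i+1) ℓ,
          (lagd (j - i - 1) (fun t => if t = 0 then ∑ r ∈ range (i+1), nn r else nn (i + t)))
            * ((∑ r ∈ Ico j ℓ, (nn r + 1)).choose (ℓ - j + 1))
        = ∑ j' ∈ Icc 1 (ℓ - i),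
            (lagd (j' - 1) (fun t => if t = 0 then ∑ r ∈ range (i+1), nn r else nn (i + t)))
              * ((∑ t ∈ Ico j' (ℓ - i),
                    ((if t = 0 then ∑ r ∈ range (i+1), nn r else nn (i + t)) + 1)).choose
                  (ℓ - i - j' + 1)) := by
      have hmap : Icc (i+1) ℓ = (Icc 1 (ℓ - i)).map (addLeftEmbedding i) := by
        rw [Finset.map_add_left_Icc]
        congr 1
        omega
      rw [hmap, Finset.sum_map]
      refine Finset.sum_congr rfl fun j' hj' => ?_
      rw [mem_Icc] at hj'
      simp only [addLeftEmbedding_apply]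
      rw [← mm_sum_Ico ℓ i j' nn hj'.1]
      have e1 : i + j' - i - 1 = j' - 1 := by omega
      have e2 : ℓ - (i + j') + 1 = ℓ - i - j' + 1 := by omega
      rw [e1, e2]
    rw [← hre] at hT
    have := congrArg (fun x : ℕ => (x : ℤ)) hT
    push_cast at this
    linarith
  · have hi : i = ℓ := by omega
    subst hi
    rw [Nat.sub_self, lagd_zero]
    rw [Finset.Icc_eq_empty (by omega : ¬ i + 1 ≤ i), Finset.sum_empty, Nat.choose_zero_right]
    norm_num

lemma head_aux : ∀ (ℓ : ℕ), ∀ (nn : ℕ → ℕ), 1 ≤ ℓ →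
    (lagd ℓ nn : ℤ) = ∑ i ∈ Finset.Icc 1 ℓ,
      (-1 : ℤ) ^ (i - 1) * (nn 0 + 1).choose i *
        lagd (ℓ - i) (fun t => if t = 0 then ∑ r ∈ Finset.range (i + 1), nn r
          else nn (i + t)) := by
  intro ℓ
  induction ℓ using Nat.strong_induction_on with
  | _ ℓ IH =>
  intro nn hℓ
  -- ℤ-version of the tail recursion at ℓ
  have hT0 := tailT ℓ nn
  have hTz : (lagd ℓ nn : ℤ)
      = ((∑ r ∈ range ℓ, (nn r + 1)).choose ℓ : ℤ)
        - ∑ j ∈ Icc 1 ℓ, (lagd (j-1) nn : ℤ)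
            * ((∑ r ∈ Ico j ℓ, (nn r + 1)).choose (ℓ - j + 1) : ℤ) := by
    have := congrArg (fun x : ℕ => (x : ℤ)) hT0
    push_cast at this
    linarith
  -- expand each RHS term via key2
  have hstep : ∀ i ∈ Icc 1 ℓ,
      (-1 : ℤ) ^ (i - 1) * ((nn 0 + 1).choose i : ℤ)
          * (lagd (ℓ - i) (fun t => if t = 0 then ∑ r ∈ range (i + 1), nn r else nn (i + t)) : ℤ)
        = (-1 : ℤ) ^ (i - 1) * ((nn 0 + 1).choose i : ℤ)
            * (((∑ r ∈ range ℓ, (nn r + 1)) - i).choose (ℓ - i) : ℤ)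
          - ∑ j ∈ Icc (i+1) ℓ,
              (-1 : ℤ) ^ (i - 1) * ((nn 0 + 1).choose i : ℤ)
                * (lagd (j - i - 1) (fun t => if t = 0 then ∑ r ∈ range (i + 1), nn r else nn (i + t)) : ℤ)
                * ((∑ r ∈ Ico j ℓ, (nn r + 1)).choose (ℓ - j + 1) : ℤ) := by
    intro i hi
    rw [mem_Icc] at hi
    rw [key2 ℓ i nn hi.1 hi.2, mul_sub, Finset.mul_sum]
    congr 1
    exact Finset.sum_congr rfl fun j hj => by ring
  rw [Finset.sum_congr rfl hstep, Finset.sum_sub_distrib]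
  -- Piece 1 : alternating Vandermonde
  have haA : nn 0 + 1 ≤ ∑ r ∈ range ℓ, (nn r + 1) := by
    have h := sum_split 1 ℓ hℓ (fun r => nn r + 1)
    have h1 : ∑ r ∈ range 1, (nn r + 1) = nn 0 + 1 := by simp
    omega
  have hP1 : ∑ i ∈ Icc 1 ℓ, (-1:ℤ)^(i-1) * ((nn 0 + 1).choose i : ℤ)
        * (((∑ r ∈ range ℓ, (nn r + 1)) - i).choose (ℓ - i) : ℤ)
      = ((∑ r ∈ range ℓ, (nn r + 1)).choose ℓ : ℤ)
        - (((∑ r ∈ range ℓ, (nn r + 1)) - (nn 0 + 1)).choose ℓ : ℤ) := by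
    have hAlt := altVan ((∑ r ∈ range ℓ, (nn r + 1)) - (nn 0 + 1)) ℓ (nn 0 + 1)
    have he : (nn 0 + 1) + ((∑ r ∈ range ℓ, (nn r + 1)) - (nn 0 + 1))
        = ∑ r ∈ range ℓ, (nn r + 1) := by omega
    rw [he, Finset.sum_range_succ'] at hAlt
    simp only [pow_zero, Nat.choose_zero_right, Nat.cast_one, mul_one, one_mul,
      Nat.sub_zero] at hAlt
    rw [← Finset.Ico_add_one_right_eq_Icc, Finset.sum_Ico_eq_sum_range]
    have e0 : ℓ + 1 - 1 = ℓ := by omega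
    rw [e0]
    have hterm : ∀ t ∈ range ℓ,
        (-1:ℤ)^(1 + t - 1) * ((nn 0 + 1).choose (1 + t) : ℤ)
            * (((∑ r ∈ range ℓ, (nn r + 1)) - (1 + t)).choose (ℓ - (1 + t)) : ℤ)
        = -((-1:ℤ)^(t+1) * ((nn 0 + 1).choose (t+1) : ℤ)
            * (((∑ r ∈ range ℓ, (nn r + 1)) - (t+1)).choose (ℓ - (t+1)) : ℤ)) := by
      intro t _
      have e1 : 1 + t - 1 = t := by omega
      have e2 : 1 + t = t + 1 := by omega
      rw [e1, e2, pow_succ]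
      ring
    rw [Finset.sum_congr rfl hterm, Finset.sum_neg_distrib]
    linarith
  rw [hP1]
  -- Piece 2 : double sum swap and inner IH
  have hfil : ∀ i : ℕ, Icc (i+1) ℓ = (Icc 1 ℓ).filter (fun j => i < j) := by
    intro i
    ext j
    simp only [mem_Icc, mem_filter]
    omega
  have hswap : ∑ i ∈ Icc 1 ℓ, ∑ j ∈ Icc (i+1) ℓ,
        (-1 : ℤ) ^ (i - 1) * ((nn 0 + 1).choose i : ℤ)
          * (lagd (j - i - 1) (fun t => if t = 0 then ∑ r ∈ range (i + 1), nn r else nn (i + t)) : ℤ)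
          * ((∑ r ∈ Ico j ℓ, (nn r + 1)).choose (ℓ - j + 1) : ℤ)
      = ∑ j ∈ Icc 1 ℓ, ∑ i ∈ Icc 1 (j-1),
        (-1 : ℤ) ^ (i - 1) * ((nn 0 + 1).choose i : ℤ)
          * (lagd (j - i - 1) (fun t => if t = 0 then ∑ r ∈ range (i + 1), nn r else nn (i + t)) : ℤ)
          * ((∑ r ∈ Ico j ℓ, (nn r + 1)).choose (ℓ - j + 1) : ℤ) := by
    have lhs_eq : ∀ i ∈ Icc 1 ℓ, ∑ j ∈ Icc (i+1) ℓ,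
          (-1 : ℤ) ^ (i - 1) * ((nn 0 + 1).choose i : ℤ)
            * (lagd (j - i - 1) (fun t => if t = 0 then ∑ r ∈ range (i + 1), nn r else nn (i + t)) : ℤ)
            * ((∑ r ∈ Ico j ℓ, (nn r + 1)).choose (ℓ - j + 1) : ℤ)
        = ∑ j ∈ Icc 1 ℓ, (if i < j then
            (-1 : ℤ) ^ (i - 1) * ((nn 0 + 1).choose i : ℤ)
              * (lagd (j - i - 1) (fun t => if t = 0 then ∑ r ∈ range (i + 1), nn r else nn (i + t)) : ℤ)
              * ((∑ r ∈ Ico j ℓ, (nn r + 1)).choose (ℓ - j + 1) : ℤ) else 0) := by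
      intro i _
      rw [hfil i, Finset.sum_filter]
    rw [Finset.sum_congr rfl lhs_eq, Finset.sum_comm]
    refine Finset.sum_congr rfl fun j hj => ?_
    rw [mem_Icc] at hj
    have : Icc 1 (j-1) = (Icc 1 ℓ).filter (fun i => i < j) := by
      ext i
      simp only [mem_Icc, mem_filter]
      omega
    rw [this, Finset.sum_filter]
  rw [hswap]
  -- evaluate inner sums via IH
  have h1mem : (1:ℕ) ∈ Icc 1 ℓ := mem_Icc.mpr ⟨le_rfl, hℓ⟩
  have hP2 : ∑ j ∈ Icc 1 ℓ, ∑ i ∈ Icc 1 (j-1),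
        (-1 : ℤ) ^ (i - 1) * ((nn 0 + 1).choose i : ℤ)
          * (lagd (j - i - 1) (fun t => if t = 0 then ∑ r ∈ range (i + 1), nn r else nn (i + t)) : ℤ)
          * ((∑ r ∈ Ico j ℓ, (nn r + 1)).choose (ℓ - j + 1) : ℤ)
      = (∑ j ∈ Icc 1 ℓ, (lagd (j-1) nn : ℤ)
            * ((∑ r ∈ Ico j ℓ, (nn r + 1)).choose (ℓ - j + 1) : ℤ))
        - (lagd 0 nn : ℤ) * ((∑ r ∈ Ico 1 ℓ, (nn r + 1)).choose (ℓ - 1 + 1) : ℤ) := by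
    rw [← Finset.add_sum_erase _ _ h1mem,
        ← Finset.add_sum_erase _ (fun j => (lagd (j-1) nn : ℤ)
            * ((∑ r ∈ Ico j ℓ, (nn r + 1)).choose (ℓ - j + 1) : ℤ)) h1mem]
    have hInner1 : ∑ i ∈ Icc 1 ((1:ℕ)-1),
        (-1 : ℤ) ^ (i - 1) * ((nn 0 + 1).choose i : ℤ)
          * (lagd (1 - i - 1) (fun t => if t = 0 then ∑ r ∈ range (i + 1), nn r else nn (i + t)) : ℤ)
          * ((∑ r ∈ Ico 1 ℓ, (nn r + 1)).choose (ℓ - 1 + 1) : ℤ) = 0 := by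
      rw [show ((1:ℕ) - 1) = 0 from rfl, Finset.Icc_eq_empty (by omega : ¬ (1:ℕ) ≤ 0),
        Finset.sum_empty]
    have hrest : ∑ j ∈ (Icc 1 ℓ).erase 1, ∑ i ∈ Icc 1 (j-1),
        (-1 : ℤ) ^ (i - 1) * ((nn 0 + 1).choose i : ℤ)
          * (lagd (j - i - 1) (fun t => if t = 0 then ∑ r ∈ range (i + 1), nn r else nn (i + t)) : ℤ)
          * ((∑ r ∈ Ico j ℓ, (nn r + 1)).choose (ℓ - j + 1) : ℤ)
        = ∑ j ∈ (Icc 1 ℓ).erase 1, (lagd (j-1) nn : ℤ)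
            * ((∑ r ∈ Ico j ℓ, (nn r + 1)).choose (ℓ - j + 1) : ℤ) := by
      refine Finset.sum_congr rfl fun j hj => ?_
      rw [mem_erase, mem_Icc] at hj
      have hj2 : 2 ≤ j := by omega
      have hjℓ : j ≤ ℓ := hj.2.2
      have hfac : ∑ i ∈ Icc 1 (j-1),
          (-1 : ℤ) ^ (i - 1) * ((nn 0 + 1).choose i : ℤ)
            * (lagd (j - i - 1) (fun t => if t = 0 then ∑ r ∈ range (i + 1), nn r else nn (i + t)) : ℤ)
            * ((∑ r ∈ Ico j ℓ, (nn r + 1)).choose (ℓ - j + 1) : ℤ)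
          = (∑ i ∈ Icc 1 (j-1),
              (-1 : ℤ) ^ (i - 1) * ((nn 0 + 1).choose i : ℤ)
                * (lagd (j - i - 1) (fun t => if t = 0 then ∑ r ∈ range (i + 1), nn r else nn (i + t)) : ℤ))
              * ((∑ r ∈ Ico j ℓ, (nn r + 1)).choose (ℓ - j + 1) : ℤ) := by
        rw [Finset.sum_mul]
      rw [hfac]
      congr 1
      have hIHj := IH (j-1) (by omega) nn (by omega)
      rw [hIHj]
      refine Finset.sum_congr rfl fun i hi => ?_
      rw [Nat.sub_right_comm]
    rw [hInner1, hrest, lagd_zero]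
    push_cast
    ring
  rw [hP2]
  have hW1 : ((∑ r ∈ Ico 1 ℓ, (nn r + 1)).choose (ℓ - 1 + 1) : ℕ)
      = (((∑ r ∈ range ℓ, (nn r + 1)) - (nn 0 + 1)).choose ℓ : ℕ) := by
    have e : ℓ - 1 + 1 = ℓ := by omega
    have h := sum_split 1 ℓ hℓ (fun r => nn r + 1)
    have h1 : ∑ r ∈ range 1, (nn r + 1) = nn 0 + 1 := by simp
    have e2 : ∑ r ∈ Ico 1 ℓ, (nn r + 1) = (∑ r ∈ range ℓ, (nn r + 1)) - (nn 0 + 1) := by omega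
    rw [e, e2]
  rw [hW1, lagd_zero]
  push_cast
  rw [hTz]
  ring


end LagAux
open LagAux in
/-- The Lagrange coefficients satisfy the recursion
`d_ℓ(n_1,...,n_ℓ) = ∑_{i=1}^{ℓ} (−1)^{i−1} C(n_1+1, i) ·
 d_{ℓ−i}(n_1+⋯+n_{i+1}, n_{i+2},...,n_ℓ)` for all `ℓ ≥ 1` and positive integers
`n_1, n_2, ...` (for `i = ℓ` the `d`-factor is `d_0 = 1`). -/
theorem lagrange_coefficient_head_recursion (ℓ : ℕ) (hℓ : 1 ≤ ℓ)
    (nn : ℕ → ℕ) (hpos : ∀ i, 0 < nn i) :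
    (lagd ℓ nn : ℤ) = ∑ i ∈ Finset.Icc 1 ℓ,
      (-1 : ℤ) ^ (i - 1) * (nn 0 + 1).choose i *
        lagd (ℓ - i) (fun t => if t = 0 then ∑ r ∈ Finset.range (i + 1), nn r
          else nn (i + t)) := by
  exact head_aux ℓ nn hℓ
end

section
/- In any category C with finite coproducts and initial object, if H is a coloop object whose comultiplication Δ is coassociative, then the left and right antipodes coincide (S_l = S_r =: S), S satisfies the 5-term identity μ∘(S ⊔ id)∘Δ = μ∘(id ⊔ S)∘Δ = u∘ε, and the codivisions satisfy the coinverse properties δ_r = (id ⊔ S)∘Δ and δ_l = (S ⊔ id)∘Δ; hence H is a cogroup. -/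
open CategoryTheory CategoryTheory.Limits

/-- Abstract loop algebra: an associative loop is a group; key identities. -/
theorem coloop_aux {M : Type*} (m : M → M → M) (e : M) (rd ld : M → M → M)
    (hassoc : ∀ a b c, m (m a b) c = m a (m b c))
    (hel : ∀ a, m e a = a) (her : ∀ a, m a e = a)
    (hrd1 : ∀ a b, m (rd a b) b = a) (hrd2 : ∀ a b, rd (m a b) b = a)
    (hld1 : ∀ a b, m a (ld a b) = b) (hld2 : ∀ a b, ld a (m a b) = b) :
    (∀ a, m a (rd e a) = e) ∧ (∀ a b, rd a b = m a (rd e b)) ∧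
    (∀ a b, ld a b = m (rd e a) b) ∧ (∀ a, ld a e = rd e a) := by
  have mul_inv : ∀ a, m a (rd e a) = e := by
    intro a
    set i := rd e a with hi
    have h1 : m i a = e := hrd1 e a
    have h2 : m (rd e i) i = e := hrd1 e i
    calc m a i = m e (m a i) := (hel _).symm
      _ = m (m (rd e i) i) (m a i) := by rw [h2]
      _ = m (rd e i) (m i (m a i)) := hassoc _ _ _
      _ = m (rd e i) (m (m i a) i) := by rw [hassoc]
      _ = m (rd e i) (m e i) := by rw [h1]
      _ = m (rd e i) i := by rw [hel]
      _ = e := h2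
  have hrd : ∀ a b, rd a b = m a (rd e b) := by
    intro a b
    have : m (m a (rd e b)) b = a := by
      rw [hassoc, hrd1, her]
    calc rd a b = rd (m (m a (rd e b)) b) b := by rw [this]
      _ = m a (rd e b) := hrd2 _ _
  have hld : ∀ a b, ld a b = m (rd e a) b := by
    intro a b
    have : m a (m (rd e a) b) = b := by
      rw [← hassoc, mul_inv, hel]
    calc ld a b = ld a (m a (m (rd e a) b)) := by rw [this]
      _ = m (rd e a) b := hld2 _ _
  exact ⟨mul_inv, hrd, hld, fun a => by rw [hld, her]⟩

/-- In a category `C` with binary coproducts and an initial object, a coloop object `H`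
(comultiplication `Δ`, counit `ε`, right codivision `δr`, left codivision `δl`,
satisfying counitarity and the left/right cocancellation properties) whose
comultiplication is coassociative is a cogroup: the left and right antipodes
`S_l = ψ₁(id ⊔ ε)δ_l` and `S_r = ψ₂(ε ⊔ id)δ_r` coincide, the common antipode `S`
satisfies the 5-term identity `μ(S ⊔ id)Δ = μ(id ⊔ S)Δ = uε`, and the codivisions
satisfy the coinverse properties `δ_r = (id ⊔ S)Δ` and `δ_l = (S ⊔ id)Δ`. -/
theorem coassociative_coloop_isCogroup {C : Type*} [Category C]
    [HasBinaryCoproducts C] [HasInitial C] (H : C)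
    (Δ : H ⟶ H ⨿ H) (ε : H ⟶ ⊥_ C) (δr δl : H ⟶ H ⨿ H)
    -- counitary properties: (ε ⊔ id)Δ = φ₂ and (id ⊔ ε)Δ = φ₁
    (hcounit₁ : Δ ≫ coprod.map ε (𝟙 H) = coprod.inr)
    (hcounit₂ : Δ ≫ coprod.map (𝟙 H) ε = coprod.inl)
    -- right cocancellation: (id ⊔ μ)(δ_r ⊔ id)Δ = i₁ = (id ⊔ μ)(Δ ⊔ id)δ_r
    (hr₁ : Δ ≫ coprod.map δr (𝟙 H) ≫ (coprod.associator H H H).hom ≫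
      coprod.map (𝟙 H) (codiag H) = coprod.inl)
    (hr₂ : δr ≫ coprod.map Δ (𝟙 H) ≫ (coprod.associator H H H).hom ≫
      coprod.map (𝟙 H) (codiag H) = coprod.inl)
    -- left cocancellation: (μ ⊔ id)(id ⊔ δ_l)Δ = i₂ = (μ ⊔ id)(id ⊔ Δ)δ_l
    (hl₁ : Δ ≫ coprod.map (𝟙 H) δl ≫ (coprod.associator H H H).inv ≫
      coprod.map (codiag H) (𝟙 H) = coprod.inr)
    (hl₂ : δl ≫ coprod.map (𝟙 H) Δ ≫ (coprod.associator H H H).inv ≫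
      coprod.map (codiag H) (𝟙 H) = coprod.inr)
    -- coassociativity of Δ
    (hcoassoc : Δ ≫ coprod.map Δ (𝟙 H) ≫ (coprod.associator H H H).hom
      = Δ ≫ coprod.map (𝟙 H) Δ) :
    -- the antipodes S_r = ψ₂(ε ⊔ id)δ_r and S_l = ψ₁(id ⊔ ε)δ_l
    let Sr : H ⟶ H := δr ≫ coprod.map ε (𝟙 H) ≫ coprod.desc (initial.to H) (𝟙 H)
    let Sl : H ⟶ H := δl ≫ coprod.map (𝟙 H) ε ≫ coprod.desc (𝟙 H) (initial.to H)
    Sl = Sr ∧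
    -- 5-term identity: μ(S ⊔ id)Δ = μ(id ⊔ S)Δ = uε
    Δ ≫ coprod.map Sr (𝟙 H) ≫ codiag H = ε ≫ initial.to H ∧
    Δ ≫ coprod.map (𝟙 H) Sr ≫ codiag H = ε ≫ initial.to H ∧
    -- coinverse properties
    δr = Δ ≫ coprod.map (𝟙 H) Sr ∧
    δl = Δ ≫ coprod.map Sr (𝟙 H) := by
  intro Sr Sl
  -- helper: associator against desc
  have ha : ∀ (X : C) (f g h : H ⟶ X),
      (coprod.associator H H H).hom ≫ coprod.desc f (coprod.desc g h)
        = coprod.desc (coprod.desc f g) h := by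
    intro X f g h; ext <;> simp [coprod.inl_desc, coprod.inr_desc, coprod.inl_desc_assoc, coprod.inr_desc_assoc]
  have ha' : ∀ (X : C) (f g h : H ⟶ X),
      (coprod.associator H H H).inv ≫ coprod.desc (coprod.desc f g) h
        = coprod.desc f (coprod.desc g h) := by
    intro X f g h; ext <;> simp [coprod.inl_desc, coprod.inr_desc, coprod.inl_desc_assoc, coprod.inr_desc_assoc]
  -- pointwise loop laws on Hom(H, X)
  have hel : ∀ (X : C) (g : H ⟶ X),
      Δ ≫ coprod.desc (ε ≫ initial.to X) g = g := by
    intro X g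
    have := hcounit₁ =≫ coprod.desc (initial.to X) g
    simpa [coprod.inl_desc, coprod.inr_desc, coprod.inl_desc_assoc, coprod.inr_desc_assoc] using this
  have her : ∀ (X : C) (f : H ⟶ X),
      Δ ≫ coprod.desc f (ε ≫ initial.to X) = f := by
    intro X f
    have := hcounit₂ =≫ coprod.desc f (initial.to X)
    simpa [coprod.inl_desc, coprod.inr_desc, coprod.inl_desc_assoc, coprod.inr_desc_assoc] using this
  have hrd1 : ∀ (X : C) (f g : H ⟶ X),
      Δ ≫ coprod.desc (δr ≫ coprod.desc f g) g = f := by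
    intro X f g
    have := hr₁ =≫ coprod.desc f g
    simpa [codiag, ha, coprod.inl_desc, coprod.inr_desc, coprod.inl_desc_assoc, coprod.inr_desc_assoc] using this
  have hrd2 : ∀ (X : C) (f g : H ⟶ X),
      δr ≫ coprod.desc (Δ ≫ coprod.desc f g) g = f := by
    intro X f g
    have := hr₂ =≫ coprod.desc f g
    simpa [codiag, ha, coprod.inl_desc, coprod.inr_desc, coprod.inl_desc_assoc, coprod.inr_desc_assoc] using this
  have hld1 : ∀ (X : C) (f g : H ⟶ X),
      Δ ≫ coprod.desc f (δl ≫ coprod.desc f g) = g := by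
    intro X f g
    have := hl₁ =≫ coprod.desc f g
    simpa [codiag, ha', coprod.inl_desc, coprod.inr_desc, coprod.inl_desc_assoc, coprod.inr_desc_assoc] using this
  have hld2 : ∀ (X : C) (f g : H ⟶ X),
      δl ≫ coprod.desc f (Δ ≫ coprod.desc f g) = g := by
    intro X f g
    have := hl₂ =≫ coprod.desc f g
    simpa [codiag, ha', coprod.inl_desc, coprod.inr_desc, coprod.inl_desc_assoc, coprod.inr_desc_assoc] using this
  have hassoc : ∀ (X : C) (f g h : H ⟶ X),
      Δ ≫ coprod.desc (Δ ≫ coprod.desc f g) h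
        = Δ ≫ coprod.desc f (Δ ≫ coprod.desc g h) := by
    intro X f g h
    have := hcoassoc =≫ coprod.desc f (coprod.desc g h)
    simpa [ha, coprod.inl_desc, coprod.inr_desc, coprod.inl_desc_assoc, coprod.inr_desc_assoc] using this
  -- the group structure on Hom(H, X)
  have key := fun (X : C) =>
    coloop_aux (M := H ⟶ X) (fun f g => Δ ≫ coprod.desc f g) (ε ≫ initial.to X)
      (fun f g => δr ≫ coprod.desc f g) (fun f g => δl ≫ coprod.desc f g)
      (hassoc X) (hel X) (her X) (hrd1 X) (hrd2 X) (hld1 X) (hld2 X)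
  -- unfold the antipodes as pointwise operations
  have hSr : ∀ (X : C) (f : H ⟶ X),
      Sr ≫ f = δr ≫ coprod.desc (ε ≫ initial.to X) f := by
    intro X f; simp [Sr]
  have hSl : ∀ (X : C) (f : H ⟶ X),
      Sl ≫ f = δl ≫ coprod.desc f (ε ≫ initial.to X) := by
    intro X f; simp [Sl]
  have hSrH : Sr = δr ≫ coprod.desc (ε ≫ initial.to H) (𝟙 H) := by
    simpa using hSr H (𝟙 H)
  have hSlH : Sl = δl ≫ coprod.desc (𝟙 H) (ε ≫ initial.to H) := by
    simpa using hSl H (𝟙 H)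
  refine ⟨?_, ?_, ?_, ?_, ?_⟩
  · -- Sl = Sr
    rw [hSlH, hSrH]
    exact (key H).2.2.2 (𝟙 H)
  · -- μ(S ⊔ id)Δ = uε
    have : Δ ≫ coprod.map Sr (𝟙 H) ≫ codiag H = Δ ≫ coprod.desc Sr (𝟙 H) := by
      simp [codiag]
    rw [this, hSrH]
    exact hrd1 H (ε ≫ initial.to H) (𝟙 H)
  · -- μ(id ⊔ S)Δ = uε
    have : Δ ≫ coprod.map (𝟙 H) Sr ≫ codiag H = Δ ≫ coprod.desc (𝟙 H) Sr := by
      simp [codiag]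
    rw [this, hSrH]
    exact (key H).1 (𝟙 H)
  · -- δr = (id ⊔ S)Δ
    have h1 : δr = δr ≫ coprod.desc coprod.inl coprod.inr := by simp
    have h2 : Δ ≫ coprod.map (𝟙 H) Sr
        = Δ ≫ coprod.desc coprod.inl (Sr ≫ coprod.inr) := by
      congr 1; ext <;> simp [coprod.inl_desc, coprod.inr_desc, coprod.inl_desc_assoc, coprod.inr_desc_assoc]
    rw [h1, h2, hSr (H ⨿ H) coprod.inr]
    exact (key (H ⨿ H)).2.1 coprod.inl coprod.inr
  · -- δl = (S ⊔ id)Δ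
    have h1 : δl = δl ≫ coprod.desc coprod.inl coprod.inr := by simp
    have h2 : Δ ≫ coprod.map Sr (𝟙 H)
        = Δ ≫ coprod.desc (Sr ≫ coprod.inl) coprod.inr := by
      congr 1; ext <;> simp [coprod.inl_desc, coprod.inr_desc, coprod.inl_desc_assoc, coprod.inr_desc_assoc]
    rw [h1, h2, hSr (H ⨿ H) coprod.inl]
    exact (key (H ⨿ H)).2.2.1 coprod.inl coprod.inr
end
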